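/- arXiv:2312.01717 — 6 statements merged into one kernel-verified Lean document; each statement's English description precedes it below -/
import Mathlib

section
/- Let A be a finite set, W a vector space over a field of characteristic zero, and φ, ψ : 2^A → W maps with ψ(∅) = φ(∅). Suppose that for every nonempty J ⊆ A one has ψ(J) = φ(J) − ∑_{j∈J} ψ(J \ {j}). Then ψ(A) = ∑_{J⊆A} (−1)^{#J} (#J)! · φ(A \ J). -/
open Finset

/-- Inclusion–exclusion type lemma: if `ψ(∅) = φ(∅)` and for every nonempty
`J ⊆ A` we have `ψ(J) = φ(J) − ∑_{j∈J} ψ(J \ {j})`, then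
`ψ(A) = ∑_{J⊆A} (−1)^{#J} (#J)! · φ(A \ J)`. -/
theorem stmt1 {α : Type*} [DecidableEq α] {F : Type*} [Field F] [CharZero F]
    {W : Type*} [AddCommGroup W] [Module F W]
    (A : Finset α) (φ ψ : Finset α → W)
    (hempty : ψ ∅ = φ ∅)
    (hrec : ∀ J ⊆ A, J.Nonempty → ψ J = φ J - ∑ j ∈ J, ψ (J.erase j)) :
    ψ A = ∑ J ∈ A.powerset, ((-1 : ℤ) ^ J.card * (Nat.factorial J.card)) • φ (A \ J) := by
  suffices H : ∀ n (B : Finset α), B ⊆ A → B.card = n →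
      ψ B = ∑ J ∈ B.powerset, ((-1 : ℤ) ^ J.card * (Nat.factorial J.card)) • φ (B \ J) by
    exact H A.card A Finset.Subset.rfl rfl
  intro n
  induction n using Nat.strong_induction_on with
  | _ n ih =>
    intro B hBA hcard
    rcases B.eq_empty_or_nonempty with rfl | hne
    · simp [hempty]
    · rw [hrec B hBA hne]
      have key : ∀ j ∈ B, ψ (B.erase j) = ∑ J ∈ (B.erase j).powerset,
          ((-1 : ℤ) ^ J.card * (Nat.factorial J.card)) • φ (B.erase j \ J) := by
        intro j hj
        exact ih (B.erase j).card
          (by rw [card_erase_of_mem hj, ← hcard]; exact Nat.sub_lt (card_pos.2 hne) one_pos)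
          _ ((erase_subset _ _).trans hBA) rfl
      rw [Finset.sum_congr rfl key]
      have step : ∑ j ∈ B, ∑ J ∈ (B.erase j).powerset,
          ((-1 : ℤ) ^ J.card * (Nat.factorial J.card)) • φ (B.erase j \ J)
          = ∑ K ∈ B.powerset.filter (fun K => K.Nonempty),
            (-(((-1 : ℤ) ^ K.card * (Nat.factorial K.card)))) • φ (B \ K) := by
        have expand : ∑ K ∈ B.powerset.filter (fun K => K.Nonempty),
            (-(((-1 : ℤ) ^ K.card * (Nat.factorial K.card)))) • φ (B \ K)
            = ∑ K ∈ B.powerset.filter (fun K => K.Nonempty), ∑ _j ∈ K,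
              ((-1 : ℤ) ^ (K.card - 1) * (Nat.factorial (K.card - 1))) • φ (B \ K) := by
          refine Finset.sum_congr rfl ?_
          intro K hK
          simp only [Finset.mem_filter, Finset.mem_powerset] at hK
          rw [Finset.sum_const]
          obtain ⟨k, hk⟩ : ∃ k, K.card = k + 1 :=
            ⟨K.card - 1, (Nat.succ_pred_eq_of_pos (card_pos.2 hK.2)).symm⟩
          rw [← natCast_zsmul, smul_smul, hk]
          congr 1
          push_cast [Nat.factorial_succ]
          ring
        rw [expand, Finset.sum_sigma', Finset.sum_sigma']
        refine Finset.sum_bij' (fun p _ => ⟨insert p.1 p.2, p.1⟩)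
          (fun q _ => ⟨q.2, q.1.erase q.2⟩) ?_ ?_ ?_ ?_ ?_
        · rintro ⟨j, J⟩ hp
          simp only [Finset.mem_sigma, Finset.mem_powerset, Finset.mem_filter] at hp ⊢
          obtain ⟨hj, hJ⟩ := hp
          exact ⟨⟨insert_subset hj (hJ.trans (erase_subset _ _)), insert_nonempty _ _⟩,
            mem_insert_self _ _⟩
        · rintro ⟨K, j⟩ hq
          simp only [Finset.mem_sigma, Finset.mem_powerset, Finset.mem_filter] at hq ⊢
          exact ⟨hq.1.1 hq.2, erase_subset_erase _ hq.1.1⟩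
        · rintro ⟨j, J⟩ hp
          simp only [Finset.mem_sigma, Finset.mem_powerset] at hp
          have hjJ : j ∉ J := fun h => (mem_erase.1 (hp.2 h)).1 rfl
          simp [erase_insert hjJ]
        · rintro ⟨K, j⟩ hq
          simp only [Finset.mem_sigma, Finset.mem_powerset, Finset.mem_filter] at hq
          simp [insert_erase hq.2]
        · rintro ⟨j, J⟩ hp
          simp only [Finset.mem_sigma, Finset.mem_powerset] at hp
          have hjJ : j ∉ J := fun h => (mem_erase.1 (hp.2 h)).1 rfl
          have h1 : (insert j J).card - 1 = J.card := by
            rw [card_insert_of_notMem hjJ]; simp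
          have h2 : B.erase j \ J = B \ insert j J := by
            ext a
            simp only [mem_sdiff, mem_erase, mem_insert]
            tauto
          simp only [h1, h2]
      rw [step]
      rw [← Finset.sum_filter_add_sum_filter_not B.powerset (fun K => K.Nonempty)]
      have hempt : B.powerset.filter (fun K => ¬K.Nonempty) = {∅} := by
        ext K
        simp only [Finset.mem_filter, Finset.mem_powerset, Finset.not_nonempty_iff_eq_empty,
          Finset.mem_singleton]
        exact ⟨fun h => h.2, fun h => by subst h; exact ⟨empty_subset _, rfl⟩⟩
      rw [hempt]
      simp only [Finset.sum_singleton, Finset.card_empty, pow_zero, Nat.factorial_zero,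
        Finset.sdiff_empty, Nat.cast_one, mul_one, one_smul, neg_smul,
        Finset.sum_neg_distrib]
      abel
end

section
/- For every n ∈ ℕ₊ there exist integer constants C_𝒫, one for each partition 𝒫 of {1,…,n}, with the following property: for any field 𝔽, any vector spaces V₁,…,Vₙ and W over 𝔽, any n-linear map Λ : V₁ × ⋯ × Vₙ → W, and any vectors v_{j,l} ∈ V_j (1 ≤ l ≤ L), one has ∑*_{(l₁,…,lₙ) distinct} Λ(v_{1,l₁},…,v_{n,lₙ}) = ∑_𝒫 C_𝒫 ∑_{(l_P)_{P∈𝒫}} Λ(v_{1,l_{𝒫(1)}},…,v_{n,l_{𝒫(n)}}), where 𝒫(j) denotes the block of 𝒫 containing j, the inner sum is over independent indices 1 ≤ l_P ≤ L for each block P, and the constants are independent of 𝔽, the spaces, Λ, L, and the vectors. -/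
open Finset

open scoped Classical in
/-- Möbius-type coefficients on the partition lattice. -/
private noncomputable def muC {n : ℕ} (P : Finpartition (univ : Finset (Fin n))) : ℤ :=
  (if P = ⊥ then 1 else 0) -
    ∑ Q ∈ (univ.filter (· < P)).attach, muC Q.1
termination_by (univ.filter (· < P)).card
decreasing_by
  have hQ : Q.1 < P := (Finset.mem_filter.1 Q.2).2
  apply Finset.card_lt_card
  constructor
  · intro R hR
    simp only [Finset.mem_filter, Finset.mem_univ, true_and] at hR ⊢
    exact hR.trans hQ
  · intro h
    have := h (Finset.mem_filter.2 ⟨Finset.mem_univ _, hQ⟩)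
    simp only [Finset.mem_filter] at this
    exact lt_irrefl _ this.2

open scoped Classical in
private lemma muC_spec {n : ℕ} (P : Finpartition (univ : Finset (Fin n))) :
    ∑ Q ∈ univ.filter (· ≤ P), muC Q = if P = ⊥ then 1 else 0 := by
  have hset : (univ.filter (· ≤ P)) = insert P (univ.filter (· < P)) := by
    ext Q
    simp only [Finset.mem_filter, Finset.mem_univ, true_and, Finset.mem_insert]
    constructor
    · intro h
      rcases eq_or_lt_of_le h with h | h
      · exact Or.inl h
      · exact Or.inr h
    · rintro (rfl | h)
      · exact le_rfl
      · exact h.le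
  rw [hset, Finset.sum_insert (by simp)]
  rw [muC]
  rw [Finset.sum_attach (univ.filter (· < P)) (fun Q => muC Q)]
  ring

/-- The general algebraic identity: for each `n ≥ 1` there are universal integer
constants `C_𝒫`, indexed by partitions `𝒫` of `{1,…,n}`, such that for any field,
any vector spaces, any `n`-linear map `Λ` and any vectors `v_{j,l}` (`1 ≤ l ≤ L`),
the sum of `Λ(v_{1,l₁},…,v_{n,lₙ})` over pairwise distinct tuples equals
`∑_𝒫 C_𝒫 ∑_{(l_P)} Λ(v_{1,l_{𝒫(1)}},…,v_{n,l_{𝒫(n)}})`.  The inner sum over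
independent indices `(l_P)_{P∈𝒫}` is encoded as the sum over all index tuples
`l : Fin n → Fin L` which are constant on the blocks of `𝒫`. -/
theorem stmt3 (n : ℕ) (hn : 0 < n) :
    ∃ C : Finpartition (univ : Finset (Fin n)) → ℤ,
      ∀ (F : Type u) [Field F] (V : Fin n → Type v)
        [∀ j, AddCommGroup (V j)] [∀ j, Module F (V j)]
        (W : Type w) [AddCommGroup W] [Module F W]
        (Λ : MultilinearMap F V W) (L : ℕ) (v : ∀ j, Fin L → V j),
        ∑ l ∈ (univ : Finset (Fin n → Fin L)).filter Function.Injective,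
            Λ (fun j => v j (l j))
          = ∑ P : Finpartition (univ : Finset (Fin n)),
              C P • ∑ l ∈ (univ : Finset (Fin n → Fin L)).filter
                  (fun l => ∀ i j : Fin n, P.part i = P.part j → l i = l j),
                Λ (fun j => v j (l j)) := by
  classical
  refine ⟨muC, ?_⟩
  intro F _ V _ _ W _ _ Λ L v
  set f : (Fin n → Fin L) → W := fun l => Λ (fun j => v j (l j)) with hf
  -- part of ⊥ is singleton
  have part_bot : ∀ a : Fin n, (⊥ : Finpartition (univ : Finset (Fin n))).part a = {a} := by
    intro a
    exact Finpartition.part_eq_of_mem _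
      (Finpartition.mem_bot_iff.2 ⟨a, mem_univ a, rfl⟩) (mem_singleton_self a)
  -- order ↔ part-respecting
  have le_iff : ∀ P Q : Finpartition (univ : Finset (Fin n)),
      P ≤ Q ↔ ∀ i j : Fin n, P.part i = P.part j → Q.part i = Q.part j := by
    intro P Q
    constructor
    · intro h i j hij
      obtain ⟨t, ht, hsub⟩ := h (P.part_mem.2 (mem_univ i))
      have hi : i ∈ t := hsub (P.mem_part (mem_univ i))
      have hj : j ∈ t := hsub (hij ▸ P.mem_part (mem_univ j))
      rw [Q.part_eq_of_mem ht hi, Q.part_eq_of_mem ht hj]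
    · intro h t ht
      obtain ⟨a, ha⟩ := P.nonempty_of_mem_parts ht
      refine ⟨Q.part a, Q.part_mem.2 (mem_univ a), fun b hb => ?_⟩
      have : P.part b = P.part a := by
        rw [P.part_eq_of_mem ht hb, P.part_eq_of_mem ht ha]
      rw [← h b a this]
      exact Q.mem_part (mem_univ b)
  -- kernel partition of l
  have key : ∀ l : Fin n → Fin L,
      ∑ P ∈ univ.filter (fun P : Finpartition (univ : Finset (Fin n)) =>
          ∀ i j : Fin n, P.part i = P.part j → l i = l j), muC P
        = if Function.Injective l then 1 else 0 := by
    intro l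
    set K := Finpartition.ofSetoid (Setoid.ker l) with hK
    have partK : ∀ i j : Fin n, K.part i = K.part j ↔ l i = l j := by
      intro i j
      rw [← Finpartition.mem_part_iff_part_eq_part K (mem_univ i) (mem_univ j),
        Finpartition.mem_part_ofSetoid_iff_rel]
      exact ⟨fun h => h.symm, fun h => h.symm⟩
    have hcond : ∀ P : Finpartition (univ : Finset (Fin n)),
        (∀ i j : Fin n, P.part i = P.part j → l i = l j) ↔ P ≤ K := by
      intro P
      rw [le_iff]
      constructor
      · intro h i j hij; exact (partK i j).2 (h i j hij)
      · intro h i j hij; exact (partK i j).1 (h i j hij)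
    have hbot : K = ⊥ ↔ Function.Injective l := by
      constructor
      · intro h i j hij
        have := (partK i j).2 hij
        rw [h, part_bot, part_bot] at this
        exact singleton_injective this
      · intro h
        refine le_antisymm ?_ bot_le
        rw [le_iff]
        intro i j hij
        have : l i = l j := (partK i j).1 hij
        rw [h this]
    calc ∑ P ∈ univ.filter (fun P : Finpartition (univ : Finset (Fin n)) =>
            ∀ i j : Fin n, P.part i = P.part j → l i = l j), muC P
        = ∑ P ∈ univ.filter (· ≤ K), muC P := by
          apply Finset.sum_congr _ (fun _ _ => rfl)
          ext P; simp only [mem_filter, mem_univ, true_and]; exact hcond P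
      _ = if K = ⊥ then 1 else 0 := muC_spec K
      _ = if Function.Injective l then 1 else 0 := if_congr hbot rfl rfl
  -- now the main computation
  have rhs : ∀ P : Finpartition (univ : Finset (Fin n)),
      (muC P • ∑ l ∈ (univ : Finset (Fin n → Fin L)).filter
          (fun l => ∀ i j : Fin n, P.part i = P.part j → l i = l j), f l)
        = ∑ l : Fin n → Fin L,
            (if (∀ i j : Fin n, P.part i = P.part j → l i = l j) then muC P • f l else 0) := by
    intro P
    rw [Finset.smul_sum, Finset.sum_filter]
  rw [Finset.sum_congr rfl (fun P _ => rhs P), Finset.sum_comm]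
  rw [Finset.sum_filter]
  apply Finset.sum_congr rfl
  intro l _
  have : ∑ P : Finpartition (univ : Finset (Fin n)),
      (if (∀ i j : Fin n, P.part i = P.part j → l i = l j) then muC P • f l else 0)
      = (∑ P ∈ univ.filter (fun P : Finpartition (univ : Finset (Fin n)) =>
          ∀ i j : Fin n, P.part i = P.part j → l i = l j), muC P) • f l := by
    rw [Finset.sum_smul, Finset.sum_filter]
  rw [this, key l]
  split <;> simp [hf]
end

section
/- In the algebraic identity expressing ∑*_{(l₁,…,lₙ) distinct} Λ(v_{1,l₁},…,v_{n,lₙ}) as ∑_𝒫 C_𝒫 ∑_{(l_P)} Λ(v_{1,l_{𝒫(1)}},…,v_{n,l_{𝒫(n)}}) over partitions 𝒫 of {1,…,n}, the coefficient of the discrete partition {{1},…,{n}} equals 1. -/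
open Finset

open Classical in
noncomputable def myCoef {n : ℕ} : Finpartition (univ : Finset (Fin n)) → ℤ :=
  (IsWellFounded.wf (r := (· < ·))).fix fun P ih =>
    if P = ⊥ then 1
    else - ∑ Q ∈ ((univ : Finset (Finpartition (univ : Finset (Fin n)))).filter (· < P)).attach,
      ih Q.1 (Finset.mem_filter.mp Q.2).2

open Classical in
lemma myCoef_eq {n : ℕ} (P : Finpartition (univ : Finset (Fin n))) :
    myCoef P = if P = ⊥ then 1
      else - ∑ Q ∈ ((univ : Finset (Finpartition (univ : Finset (Fin n)))).filter (· < P)).attach,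
        myCoef Q.1 := by
  rw [myCoef, WellFounded.fix_eq]

open Classical in
lemma myCoef_sum {n : ℕ} (Q : Finpartition (univ : Finset (Fin n))) :
    ∑ P ∈ (univ : Finset (Finpartition (univ : Finset (Fin n)))).filter (· ≤ Q), myCoef P
      = if Q = ⊥ then 1 else 0 := by
  by_cases hQ : Q = ⊥
  · subst hQ
    rw [if_pos rfl]
    have h1 : (univ : Finset (Finpartition (univ : Finset (Fin n)))).filter (· ≤ ⊥) = {⊥} := by
      ext P; simp [le_bot_iff]
    rw [h1, Finset.sum_singleton, myCoef_eq, if_pos rfl]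
  · rw [if_neg hQ]
    have hsplit : (univ : Finset (Finpartition (univ : Finset (Fin n)))).filter (· ≤ Q)
        = insert Q ((univ : Finset (Finpartition (univ : Finset (Fin n)))).filter (· < Q)) := by
      ext P
      rw [Finset.mem_insert, Finset.mem_filter, Finset.mem_filter]
      constructor
      · rintro ⟨-, h⟩
        rcases eq_or_lt_of_le h with h | h
        · exact Or.inl h
        · exact Or.inr ⟨Finset.mem_univ _, h⟩
      · rintro (rfl | ⟨-, h⟩)
        · exact ⟨Finset.mem_univ _, le_rfl⟩
        · exact ⟨Finset.mem_univ _, le_of_lt h⟩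
    rw [hsplit, Finset.sum_insert (by simp), myCoef_eq, if_neg hQ,
      Finset.sum_attach _ myCoef]
    ring

open Classical in
noncomputable def kerPart {n L : ℕ} (l : Fin n → Fin L) : Finpartition (univ : Finset (Fin n)) :=
  Finpartition.ofSetoid (Setoid.ker l)

open Classical in
lemma mem_kerPart {n L : ℕ} (l : Fin n → Fin L) (a b : Fin n) :
    b ∈ (kerPart l).part a ↔ l a = l b :=
  Finpartition.mem_part_ofSetoid_iff_rel

lemma bot_part {n : ℕ} (a : Fin n) :
    (⊥ : Finpartition (univ : Finset (Fin n))).part a = {a} := by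
  apply Finpartition.part_eq_of_mem
  · rw [Finpartition.parts_bot, Finset.mem_map]
    exact ⟨a, Finset.mem_univ _, rfl⟩
  · exact Finset.mem_singleton_self a

lemma le_kerPart_iff {n L : ℕ} {P : Finpartition (univ : Finset (Fin n))} {l : Fin n → Fin L} :
    P ≤ kerPart l ↔ ∀ i j : Fin n, P.part i = P.part j → l i = l j := by
  constructor
  · intro hle i j hij
    obtain ⟨c, hc, hsub⟩ := hle (P.part_mem.mpr (Finset.mem_univ i))
    have hi : i ∈ c := hsub (P.mem_part (Finset.mem_univ i))
    have hj : j ∈ c := hsub (hij ▸ P.mem_part (Finset.mem_univ j))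
    have : c = (kerPart l).part i :=
      ((kerPart l).part_eq_of_mem hc hi).symm
    rw [this] at hj
    exact (mem_kerPart l i j).1 hj
  · intro h b hb
    obtain ⟨a, ha⟩ := P.nonempty_of_mem_parts hb
    refine ⟨(kerPart l).part a, (kerPart l).part_mem.mpr (Finset.mem_univ a), fun j hj => ?_⟩
    rw [mem_kerPart]
    exact (h a j (by rw [P.part_eq_of_mem hb ha, P.part_eq_of_mem hb hj]))

lemma kerPart_eq_bot_iff {n L : ℕ} {l : Fin n → Fin L} :
    kerPart l = ⊥ ↔ Function.Injective l := by
  constructor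
  · intro h a b hab
    have : b ∈ (kerPart l).part a := (mem_kerPart l a b).2 hab
    rw [h, bot_part, Finset.mem_singleton] at this
    exact this.symm
  · intro h
    refine le_bot_iff.mp (fun b hb => ?_)
    obtain ⟨a, ha⟩ := (kerPart l).nonempty_of_mem_parts hb
    refine ⟨{a}, ?_, fun j hj => ?_⟩
    · rw [Finpartition.parts_bot, Finset.mem_map]
      exact ⟨a, Finset.mem_univ _, rfl⟩
    · rw [Finset.mem_singleton]
      have : j ∈ (kerPart l).part a := by rw [(kerPart l).part_eq_of_mem hb ha]; exact hj
      exact (h ((mem_kerPart l a j).1 this)).symm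


/-- In the algebraic identity expressing the sum of `Λ(v_{1,l₁},…,v_{n,lₙ})` over
pairwise distinct tuples as `∑_𝒫 C_𝒫 ∑_{(l_P)} Λ(v_{1,l_{𝒫(1)}},…,v_{n,l_{𝒫(n)}})`,
the coefficient of the discrete partition `{{1},…,{n}}` (which is `⊥` as a
`Finpartition`) equals `1`. -/
theorem stmt4 (n : ℕ) (hn : 0 < n) :
    ∃ C : Finpartition (univ : Finset (Fin n)) → ℤ,
      (∀ (F : Type u) [Field F] (V : Fin n → Type v)
        [∀ j, AddCommGroup (V j)] [∀ j, Module F (V j)]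
        (W : Type w) [AddCommGroup W] [Module F W]
        (Λ : MultilinearMap F V W) (L : ℕ) (v : ∀ j, Fin L → V j),
        ∑ l ∈ (univ : Finset (Fin n → Fin L)).filter Function.Injective,
            Λ (fun j => v j (l j))
          = ∑ P : Finpartition (univ : Finset (Fin n)),
              C P • ∑ l ∈ (univ : Finset (Fin n → Fin L)).filter
                  (fun l => ∀ i j : Fin n, P.part i = P.part j → l i = l j),
                Λ (fun j => v j (l j)))
      ∧ C (⊥ : Finpartition (univ : Finset (Fin n))) = 1 := by
  classical
  refine ⟨myCoef, ?_, by rw [myCoef_eq, if_pos rfl]⟩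
  intro F _ V _ _ W _ _ Λ L v
  calc
    ∑ l ∈ (univ : Finset (Fin n → Fin L)).filter Function.Injective,
        Λ (fun j => v j (l j))
      = ∑ l ∈ (univ : Finset (Fin n → Fin L)),
          if Function.Injective l then Λ (fun j => v j (l j)) else 0 :=
        Finset.sum_filter _ _
    _ = ∑ l ∈ (univ : Finset (Fin n → Fin L)),
          (if kerPart l = ⊥ then (1 : ℤ) else 0) • Λ (fun j => v j (l j)) := by
        refine Finset.sum_congr rfl fun l _ => ?_
        by_cases h : Function.Injective l
        · rw [if_pos h, if_pos (kerPart_eq_bot_iff.mpr h), one_smul]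
        · rw [if_neg h, if_neg (fun hb => h (kerPart_eq_bot_iff.mp hb)), zero_smul]
    _ = ∑ l ∈ (univ : Finset (Fin n → Fin L)),
          (∑ P ∈ (univ : Finset (Finpartition (univ : Finset (Fin n)))).filter
              (· ≤ kerPart l), myCoef P) • Λ (fun j => v j (l j)) := by
        refine Finset.sum_congr rfl fun l _ => ?_
        rw [myCoef_sum]
    _ = ∑ l ∈ (univ : Finset (Fin n → Fin L)),
          ∑ P ∈ (univ : Finset (Finpartition (univ : Finset (Fin n)))),
            if P ≤ kerPart l then myCoef P • Λ (fun j => v j (l j)) else 0 := by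
        refine Finset.sum_congr rfl fun l _ => ?_
        rw [Finset.sum_smul, Finset.sum_filter]
    _ = ∑ P ∈ (univ : Finset (Finpartition (univ : Finset (Fin n)))),
          ∑ l ∈ (univ : Finset (Fin n → Fin L)),
            if P ≤ kerPart l then myCoef P • Λ (fun j => v j (l j)) else 0 :=
        Finset.sum_comm
    _ = ∑ P : Finpartition (univ : Finset (Fin n)),
          myCoef P • ∑ l ∈ (univ : Finset (Fin n → Fin L)).filter
              (fun l => ∀ i j : Fin n, P.part i = P.part j → l i = l j),
            Λ (fun j => v j (l j)) := by
        refine Finset.sum_congr rfl fun P _ => ?_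
        rw [Finset.smul_sum,
          Finset.filter_congr (fun l _ => (le_kerPart_iff (P := P) (l := l)).symm),
          Finset.sum_filter]
end

section
/- Let n be even. In the algebraic identity expressing ∑*_{(l₁,…,lₙ) distinct} Λ(v_{1,l₁},…,v_{n,lₙ}) = ∑_𝒫 C_𝒫 ∑_{(l_P)} Λ(v_{1,l_{𝒫(1)}},…,v_{n,l_{𝒫(n)}}), every partition 𝒫 of {1,…,n} all of whose blocks have exactly two elements (a perfect matching) has coefficient C_𝒫 = (−1)^{n/2}. -/
open Finset

namespace Stmt5Aux

variable {n : ℕ}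

abbrev Pa (n : ℕ) := Finpartition (univ : Finset (Fin n))

/-- `P` is finer than `Q` (as relations). -/
def rel (P Q : Pa n) : Prop := ∀ i j : Fin n, P.part i = P.part j → Q.part i = Q.part j

instance (P Q : Pa n) : Decidable (rel P Q) := by unfold rel; infer_instance

lemma rel_refl (P : Pa n) : rel P P := fun _ _ h => h

lemma rel_trans {P Q R : Pa n} (h1 : rel P Q) (h2 : rel Q R) : rel P R :=
  fun i j h => h2 _ _ (h1 _ _ h)

lemma mem_part_iff (P : Pa n) {i j : Fin n} : j ∈ P.part i ↔ P.part j = P.part i :=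
  P.mem_part_iff_part_eq_part (mem_univ j) (mem_univ i)

lemma part_eq_filter (P : Pa n) (i : Fin n) :
    P.part i = univ.filter (fun j => P.part j = P.part i) := by
  ext j
  simp [mem_part_iff]

lemma eq_of_part_eq {P Q : Pa n} (h : ∀ i, P.part i = Q.part i) : P = Q := by
  ext t
  constructor
  · intro ht
    obtain ⟨i, hi⟩ := P.nonempty_of_mem_parts ht
    have : P.part i = t := P.part_eq_of_mem ht hi
    rw [← this, h]
    exact Q.part_mem.2 (mem_univ i)
  · intro ht
    obtain ⟨i, hi⟩ := Q.nonempty_of_mem_parts ht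
    have : Q.part i = t := Q.part_eq_of_mem ht hi
    rw [← this, ← h]
    exact P.part_mem.2 (mem_univ i)

lemma eq_of_rel_iff {P Q : Pa n} (h : ∀ i j, P.part i = P.part j ↔ Q.part i = Q.part j) :
    P = Q := by
  refine eq_of_part_eq fun i => ?_
  rw [part_eq_filter P i, part_eq_filter Q i]
  exact Finset.filter_congr fun j _ => h j i

lemma rel_antisymm {P Q : Pa n} (h1 : rel P Q) (h2 : rel Q P) : P = Q :=
  eq_of_rel_iff fun i j => ⟨h1 i j, h2 i j⟩

lemma part_subset_of_rel {P Q : Pa n} (h : rel P Q) (i : Fin n) : P.part i ⊆ Q.part i := by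
  intro j hj
  rw [mem_part_iff] at hj ⊢
  exact h _ _ hj

lemma ofSetoid_part_eq_iff (s : Setoid (Fin n)) [DecidableRel (⇑s : Fin n → Fin n → Prop)]
    (i j : Fin n) : (Finpartition.ofSetoid s).part i = (Finpartition.ofSetoid s).part j ↔ s i j := by
  rw [← mem_part_iff]
  rw [Finpartition.mem_part_ofSetoid_iff_rel]
  exact ⟨fun h => s.symm h, fun h => s.symm h⟩

def copSetoid {L : ℕ} (l : Fin n → Fin L) : Setoid (Fin n) :=
  ⟨fun a b => l a = l b, ⟨fun _ => rfl, Eq.symm, Eq.trans⟩⟩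

instance {L : ℕ} (l : Fin n → Fin L) : DecidableRel (⇑(copSetoid l) : Fin n → Fin n → Prop) :=
  fun a b => inferInstanceAs (Decidable (l a = l b))

def cop {L : ℕ} (l : Fin n → Fin L) : Pa n := Finpartition.ofSetoid (copSetoid l)

lemma cop_part_eq_iff {L : ℕ} (l : Fin n → Fin L) (i j : Fin n) :
    (cop l).part i = (cop l).part j ↔ l i = l j :=
  ofSetoid_part_eq_iff (copSetoid l) i j

def disc (P : Pa n) : Prop := ∀ i j : Fin n, P.part i = P.part j → i = j

instance (P : Pa n) : Decidable (disc P) := by unfold disc; infer_instance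

lemma cond_iff_rel {L : ℕ} (P : Pa n) (l : Fin n → Fin L) :
    (∀ i j : Fin n, P.part i = P.part j → l i = l j) ↔ rel P (cop l) := by
  unfold rel
  simp only [cop_part_eq_iff]

lemma inj_iff_disc {L : ℕ} (l : Fin n → Fin L) : Function.Injective l ↔ disc (cop l) := by
  unfold disc
  simp only [cop_part_eq_iff]
  exact ⟨fun h i j => fun e => h e, fun h i j e => h i j e⟩

def below (P : Pa n) : Finset (Pa n) := univ.filter (fun Q => rel Q P)

lemma mem_below {P Q : Pa n} : Q ∈ below P ↔ rel Q P := by simp [below]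

lemma self_mem_below (P : Pa n) : P ∈ below P := mem_below.2 (rel_refl P)

lemma below_card_lt {P Q : Pa n} (h : rel Q P) (hne : Q ≠ P) :
    (below Q).card < (below P).card := by
  apply Finset.card_lt_card
  constructor
  · intro R hR
    exact mem_below.2 (rel_trans (mem_below.1 hR) h)
  · intro hsub
    have : P ∈ below Q := hsub (self_mem_below P)
    exact (Ne.symm hne) (rel_antisymm (mem_below.1 this) h)

def mu : Pa n → ℤ
  | P => (if disc P then 1 else 0) - ∑ Q ∈ ((below P).erase P).attach, mu Q.1
termination_by P => (below P).card
decreasing_by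
  have h1 := Finset.mem_erase.1 Q.2
  exact below_card_lt (mem_below.1 h1.2) h1.1

lemma mu_spec (P : Pa n) :
    mu P = (if disc P then 1 else 0) - ∑ Q ∈ (below P).erase P, mu Q := by
  rw [mu, ← Finset.sum_attach ((below P).erase P) mu]

lemma sum_mu (P : Pa n) : ∑ Q ∈ below P, mu Q = if disc P then 1 else 0 := by
  rw [← Finset.add_sum_erase _ _ (self_mem_below P), mu_spec P]
  ring


lemma identity (W : Type*) [AddCommGroup W] (L : ℕ) (f : (Fin n → Fin L) → W) :
    ∑ l ∈ (univ : Finset (Fin n → Fin L)).filter Function.Injective, f l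
      = ∑ P : Pa n, mu P • ∑ l ∈ (univ : Finset (Fin n → Fin L)).filter
          (fun l => ∀ i j : Fin n, P.part i = P.part j → l i = l j), f l := by
  have h1 : ∀ P : Pa n,
      (mu P • ∑ l ∈ (univ : Finset (Fin n → Fin L)).filter
          (fun l => ∀ i j : Fin n, P.part i = P.part j → l i = l j), f l)
        = ∑ l : Fin n → Fin L, if rel P (cop l) then mu P • f l else 0 := by
    intro P
    rw [Finset.sum_filter, Finset.smul_sum]
    exact Finset.sum_congr rfl fun l _ => by
      rw [smul_ite, smul_zero]
      exact if_congr (cond_iff_rel P l) rfl rfl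
  rw [Finset.sum_congr rfl fun P _ => h1 P, Finset.sum_comm]
  have h2 : ∀ l : Fin n → Fin L,
      (∑ P : Pa n, if rel P (cop l) then mu P • f l else 0)
        = if Function.Injective l then f l else 0 := by
    intro l
    rw [← Finset.sum_filter]
    have : (univ : Finset (Pa n)).filter (fun P => rel P (cop l)) = below (cop l) := rfl
    rw [this, ← Finset.sum_smul, sum_mu, ite_smul, one_smul, zero_smul]
    exact if_congr (inj_iff_disc l).symm rfl rfl
  rw [Finset.sum_congr rfl fun l _ => h2 l, ← Finset.sum_filter]


def pset (R : Pa n) : Finset (Fin n × Fin n) :=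
  univ.filter (fun p => p.1 < p.2 ∧ R.part p.1 = R.part p.2)

def kp (R : Pa n) : ℕ := (pset R).card

lemma mem_pset {R : Pa n} {p : Fin n × Fin n} :
    p ∈ pset R ↔ p.1 < p.2 ∧ R.part p.1 = R.part p.2 := by simp [pset]

lemma kp_disc {Q : Pa n} (h : disc Q) : kp Q = 0 := by
  rw [kp, Finset.card_eq_zero, Finset.eq_empty_iff_forall_notMem]
  rintro p hp
  rw [mem_pset] at hp
  exact absurd (h _ _ hp.2) (ne_of_lt hp.1)

lemma two_mem_lt {t : Finset (Fin n)} (ht : t.card = 2) {u v u' v' : Fin n}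
    (hu : u ∈ t) (hv : v ∈ t) (hu' : u' ∈ t) (hv' : v' ∈ t)
    (h : u < v) (h' : u' < v') : u = u' ∧ v = v' := by
  obtain ⟨x, y, hxy, rfl⟩ := Finset.card_eq_two.1 ht
  simp only [mem_insert, mem_singleton] at hu hv hu' hv'
  rcases hu with rfl|rfl <;> rcases hv with rfl|rfl <;> rcases hu' with rfl|rfl <;>
    rcases hv' with rfl|rfl <;>
    first
      | exact ⟨rfl, rfl⟩
      | exact absurd h (lt_irrefl _)
      | exact absurd h' (lt_irrefl _)
      | exact absurd (h.trans h') (lt_irrefl _)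
      | exact absurd (h'.trans h) (lt_irrefl _)

lemma kp_matching (P : Pa n) (hP : ∀ t ∈ P.parts, t.card = 2) (heven : Even n) :
    kp P = n / 2 := by
  have hcard : kp P = P.parts.card := by
    apply Finset.card_bij (fun p _ => P.part p.1)
    · intro p _
      exact P.part_mem.2 (mem_univ _)
    · intro p hp q hq hpq
      rw [mem_pset] at hp hq
      have ht : (P.part p.1).card = 2 := hP _ (P.part_mem.2 (mem_univ _))
      have hp1 : p.1 ∈ P.part p.1 := P.mem_part (mem_univ _)
      have hp2 : p.2 ∈ P.part p.1 := (mem_part_iff P).2 hp.2.symm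
      have hq1 : q.1 ∈ P.part p.1 := by rw [hpq]; exact P.mem_part (mem_univ _)
      have hq2 : q.2 ∈ P.part p.1 := by rw [hpq]; exact (mem_part_iff P).2 hq.2.symm
      obtain ⟨e1, e2⟩ := two_mem_lt ht hp1 hp2 hq1 hq2 hp.1 hq.1
      exact Prod.ext e1 e2
    · intro t ht
      obtain ⟨x, y, hxy, rfl⟩ := Finset.card_eq_two.1 (hP t ht)
      have hx : x ∈ ({x, y} : Finset (Fin n)) := by simp
      have hy : y ∈ ({x, y} : Finset (Fin n)) := by simp
      rcases hxy.lt_or_gt with hlt | hlt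
      · refine ⟨(x, y), ?_, P.part_eq_of_mem ht hx⟩
        rw [mem_pset]
        exact ⟨hlt, by rw [P.part_eq_of_mem ht hx, P.part_eq_of_mem ht hy]⟩
      · refine ⟨(y, x), ?_, P.part_eq_of_mem ht hy⟩
        rw [mem_pset]
        exact ⟨hlt, by rw [P.part_eq_of_mem ht hx, P.part_eq_of_mem ht hy]⟩
  have hsum : 2 * P.parts.card = n := by
    have h1 := P.sum_card_parts
    rw [Finset.sum_congr rfl (fun t ht => hP t ht)] at h1
    simp only [Finset.sum_const, smul_eq_mul, Finset.card_univ, Fintype.card_fin] at h1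
    omega
  obtain ⟨m, hm⟩ := heven
  omega


def tfn (a b : Fin n) (R : Pa n) (i : Fin n) : Finset (Fin n) × Bool :=
  if R.part a = R.part b then (R.part i, decide (i = a))
  else (if R.part i = R.part a ∨ R.part i = R.part b then R.part a ∪ R.part b else R.part i,
    false)

def tSetoid (a b : Fin n) (R : Pa n) : Setoid (Fin n) := Setoid.ker (tfn a b R)

instance (a b : Fin n) (R : Pa n) : DecidableRel (⇑(tSetoid a b R) : Fin n → Fin n → Prop) :=
  fun i j => decidable_of_iff (tfn a b R i = tfn a b R j) Iff.rfl

def toggle (a b : Fin n) (R : Pa n) : Pa n := Finpartition.ofSetoid (tSetoid a b R)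

lemma toggle_part_eq_iff (a b : Fin n) (R : Pa n) (i j : Fin n) :
    (toggle a b R).part i = (toggle a b R).part j ↔ tfn a b R i = tfn a b R j :=
  ofSetoid_part_eq_iff (tSetoid a b R) i j

lemma tfn_split {a b : Fin n} {R : Pa n} (hab : R.part a = R.part b) (i j : Fin n) :
    tfn a b R i = tfn a b R j ↔ (R.part i = R.part j ∧ (i = a ↔ j = a)) := by
  unfold tfn
  simp only [if_pos hab, Prod.mk.injEq, decide_eq_decide]

lemma tfn_merge {a b : Fin n} {R : Pa n} (hab : R.part a ≠ R.part b) (i j : Fin n) :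
    tfn a b R i = tfn a b R j ↔
      (R.part i = R.part j ∨ (R.part i = R.part a ∧ R.part j = R.part b)
        ∨ (R.part i = R.part b ∧ R.part j = R.part a)) := by
  unfold tfn
  simp only [if_neg hab, Prod.mk.injEq, and_true]
  have hmem : ∀ x : Fin n, ¬(R.part x = R.part a ∨ R.part x = R.part b) →
      R.part a ∪ R.part b ≠ R.part x := by
    intro x hx habs
    apply hx
    left
    have : a ∈ R.part x := by
      rw [← habs]; exact mem_union_left _ (R.mem_part (mem_univ a))
    exact ((mem_part_iff R).1 this).symm
  by_cases hi : R.part i = R.part a ∨ R.part i = R.part b <;>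
    by_cases hj : R.part j = R.part a ∨ R.part j = R.part b
  · rw [if_pos hi, if_pos hj]
    constructor
    · intro _
      rcases hi with hi|hi <;> rcases hj with hj|hj
      · left; rw [hi, hj]
      · right; left; exact ⟨hi, hj⟩
      · right; right; exact ⟨hi, hj⟩
      · left; rw [hi, hj]
    · intro _; rfl
  · rw [if_pos hi, if_neg hj]
    constructor
    · intro h; exact absurd h (hmem j hj)
    · rintro (h | ⟨h1, h2⟩ | ⟨h1, h2⟩)
      · rcases hi with hi|hi
        · exact absurd (Or.inl (h.symm.trans hi)) hj
        · exact absurd (Or.inr (h.symm.trans hi)) hj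
      · exact absurd (Or.inr h2) hj
      · exact absurd (Or.inl h2) hj
  · rw [if_neg hi, if_pos hj]
    constructor
    · intro h; exact absurd h.symm (hmem i hi)
    · rintro (h | ⟨h1, h2⟩ | ⟨h1, h2⟩)
      · rcases hj with hj'|hj'
        · exact absurd (Or.inl (h.trans hj')) hi
        · exact absurd (Or.inr (h.trans hj')) hi
      · exact absurd (Or.inl h1) hi
      · exact absurd (Or.inr h1) hi
  · rw [if_neg hi, if_neg hj]
    constructor
    · intro h; exact Or.inl h
    · rintro (h | ⟨h1, h2⟩ | ⟨h1, h2⟩)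
      · exact h
      · exact absurd (Or.inl h1) hi
      · exact absurd (Or.inr h1) hi

lemma part_singleton_left {a b : Fin n} {R : Pa n} (hsub : R.part a ⊆ {a, b})
    (hne : R.part a ≠ R.part b) : R.part a = {a} := by
  ext x
  rw [mem_singleton]
  constructor
  · intro hx
    rcases mem_insert.1 (hsub hx) with h | h
    · exact h
    · rw [mem_singleton] at h
      subst h
      exact absurd ((mem_part_iff R).1 hx).symm hne
  · intro hx
    rw [hx]
    exact R.mem_part (mem_univ a)

lemma part_singleton_right {a b : Fin n} {R : Pa n} (hsub : R.part b ⊆ {a, b})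
    (hne : R.part a ≠ R.part b) : R.part b = {b} := by
  ext x
  rw [mem_singleton]
  constructor
  · intro hx
    rcases mem_insert.1 (hsub hx) with h | h
    · subst h
      exact absurd ((mem_part_iff R).1 hx) hne
    · rw [mem_singleton] at h
      exact h
  · intro hx
    rw [hx]
    exact R.mem_part (mem_univ b)

lemma toggle_rel {a b : Fin n} {Q R : Pa n} (hRQ : rel R Q) (hQab : Q.part a = Q.part b) :
    rel (toggle a b R) Q := by
  intro i j h
  rw [toggle_part_eq_iff] at h
  by_cases hpe : R.part a = R.part b
  · exact hRQ i j ((tfn_split hpe i j).1 h).1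
  · rcases (tfn_merge hpe i j).1 h with h | ⟨h1, h2⟩ | ⟨h1, h2⟩
    · exact hRQ i j h
    · rw [hRQ i a h1, hRQ j b h2, hQab]
    · rw [hRQ i b h1, hRQ j a h2, hQab]

lemma toggle_ne {a b : Fin n} {R : Pa n} (hab : a ≠ b) : toggle a b R ≠ R := by
  intro he
  by_cases hpe : R.part a = R.part b
  · have h1 : (toggle a b R).part a = (toggle a b R).part b := by rw [he]; exact hpe
    rw [toggle_part_eq_iff, tfn_split hpe] at h1
    exact hab (h1.2.1 rfl).symm
  · have h1 : (toggle a b R).part a = (toggle a b R).part b :=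
      (toggle_part_eq_iff a b R a b).2 ((tfn_merge hpe a b).2 (Or.inr (Or.inl ⟨rfl, rfl⟩)))
    rw [he] at h1
    exact hpe h1

lemma toggle_toggle {a b : Fin n} {R : Pa n} (hab : a ≠ b)
    (hRa : R.part a ⊆ {a, b}) (hRb : R.part b ⊆ {a, b}) :
    toggle a b (toggle a b R) = R := by
  set R' := toggle a b R with hR'
  apply eq_of_rel_iff
  intro i j
  rw [toggle_part_eq_iff]
  by_cases hpe : R.part a = R.part b
  · have hchar : ∀ i j : Fin n, R'.part i = R'.part j ↔
        (R.part i = R.part j ∧ (i = a ↔ j = a)) :=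
      fun i j => (toggle_part_eq_iff a b R i j).trans (tfn_split hpe i j)
    have hne' : R'.part a ≠ R'.part b := by
      intro hcon
      obtain ⟨-, hiff⟩ := (hchar a b).1 hcon
      exact hab (hiff.mp rfl).symm
    rw [tfn_merge hne' i j, hchar i j, hchar i a, hchar j b, hchar i b, hchar j a]
    constructor
    · rintro (⟨h, -⟩ | ⟨⟨h1, -⟩, ⟨h2, -⟩⟩ | ⟨⟨h1, -⟩, ⟨h2, -⟩⟩)
      · exact h
      · exact h1.trans (hpe.trans h2.symm)
      · exact h1.trans (hpe.symm.trans h2.symm)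
    · intro h
      by_cases hia : i = a
      · have hj' : j ∈ R.part a := (mem_part_iff R).2 (by rw [← hia]; exact h.symm)
        rcases mem_insert.1 (hRa hj') with hj | hj
        · left
          exact ⟨h, by simp [hia, hj]⟩
        · rw [mem_singleton] at hj
          right; left
          exact ⟨⟨by rw [hia], by simp [hia]⟩, ⟨by rw [hj], by simp [hj, hia]⟩⟩
      · by_cases hja : j = a
        · have hi' : i ∈ R.part a := (mem_part_iff R).2 (by rw [← hja]; exact h)
          rcases mem_insert.1 (hRa hi') with hi | hi
          · exact absurd hi hia
          · rw [mem_singleton] at hi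
            right; right
            exact ⟨⟨by rw [hi], by simp [hi, hja]⟩, ⟨by rw [hja], by simp [hja]⟩⟩
        · left
          exact ⟨h, by simp [hia, hja]⟩
  · have hpa : R.part a = {a} := part_singleton_left hRa hpe
    have hpb : R.part b = {b} := part_singleton_right hRb hpe
    have hchar : ∀ i j : Fin n, R'.part i = R'.part j ↔
        (R.part i = R.part j ∨ (R.part i = R.part a ∧ R.part j = R.part b)
          ∨ (R.part i = R.part b ∧ R.part j = R.part a)) :=
      fun i j => (toggle_part_eq_iff a b R i j).trans (tfn_merge hpe i j)
    have hmema : ∀ x : Fin n, R.part x = R.part a → x = a := by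
      intro x hx
      have hxx : x ∈ R.part x := R.mem_part (mem_univ x)
      rw [hx, hpa, mem_singleton] at hxx
      exact hxx
    have hmemb : ∀ x : Fin n, R.part x = R.part b → x = b := by
      intro x hx
      have hxx : x ∈ R.part x := R.mem_part (mem_univ x)
      rw [hx, hpb, mem_singleton] at hxx
      exact hxx
    have heq' : R'.part a = R'.part b := (hchar a b).2 (Or.inr (Or.inl ⟨rfl, rfl⟩))
    rw [tfn_split heq' i j, hchar i j]
    constructor
    · rintro ⟨(h | ⟨h1, h2⟩ | ⟨h1, h2⟩), hiff⟩
      · exact h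
      · exact absurd ((hiff.1 (hmema i h1)).symm.trans (hmemb j h2)) hab
      · exact absurd ((hiff.2 (hmema j h2)).symm.trans (hmemb i h1)) hab
    · intro h
      refine ⟨Or.inl h, fun hia => ?_, fun hja => ?_⟩
      · exact hmema j (hia ▸ h).symm
      · exact hmema i (hja ▸ h)

lemma kp_toggle_split {a b : Fin n} {R : Pa n} (hab : a < b) (hpe : R.part a = R.part b)
    (hRa : R.part a ⊆ {a, b}) : kp R = kp (toggle a b R) + 1 := by
  have hchar : ∀ i j : Fin n, (toggle a b R).part i = (toggle a b R).part j ↔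
      (R.part i = R.part j ∧ (i = a ↔ j = a)) :=
    fun i j => (toggle_part_eq_iff a b R i j).trans (tfn_split hpe i j)
  have hnotin : (a, b) ∉ pset (toggle a b R) := by
    rw [mem_pset]
    rintro ⟨-, h⟩
    rw [hchar] at h
    exact ne_of_gt hab (h.2.1 rfl)
  have hset : pset R = insert (a, b) (pset (toggle a b R)) := by
    ext ⟨i, j⟩
    rw [mem_insert, mem_pset, mem_pset]
    constructor
    · rintro ⟨hij, he⟩
      by_cases hc : (i, j) = (a, b)
      · exact Or.inl hc
      · right
        refine ⟨hij, (hchar i j).2 ⟨he, fun hia => ?_, fun hja => ?_⟩⟩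
        · have hj' : j ∈ R.part a := (mem_part_iff R).2 (by rw [← hia]; exact he.symm)
          rcases mem_insert.1 (hRa hj') with hj | hj
          · exact hj
          · rw [mem_singleton] at hj
            exact absurd (Prod.ext hia hj) hc
        · exfalso
          have hi' : i ∈ R.part a := (mem_part_iff R).2 (by rw [← hja]; exact he)
          rcases mem_insert.1 (hRa hi') with hi | hi
          · exact ne_of_lt hij (hi.trans hja.symm)
          · rw [mem_singleton] at hi
            rw [hi, hja] at hij
            exact lt_asymm hab hij
    · rintro (hc | ⟨hij, he⟩)
      · rw [Prod.mk.injEq] at hc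
        obtain ⟨h1, h2⟩ := hc
        exact ⟨by rw [h1, h2]; exact hab, by rw [h1, h2]; exact hpe⟩
      · exact ⟨hij, ((hchar i j).1 he).1⟩
  rw [kp, kp, hset, card_insert_of_notMem hnotin]

lemma kp_toggle_merge {a b : Fin n} {R : Pa n} (hab : a < b) (hpe : R.part a ≠ R.part b)
    (hRa : R.part a ⊆ {a, b}) (hRb : R.part b ⊆ {a, b}) :
    kp (toggle a b R) = kp R + 1 := by
  have hpa : R.part a = {a} := part_singleton_left hRa hpe
  have hpb : R.part b = {b} := part_singleton_right hRb hpe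
  have hmema : ∀ x : Fin n, R.part x = R.part a → x = a := by
    intro x hx
    have hxx : x ∈ R.part x := R.mem_part (mem_univ x)
    rw [hx, hpa, mem_singleton] at hxx
    exact hxx
  have hmemb : ∀ x : Fin n, R.part x = R.part b → x = b := by
    intro x hx
    have hxx : x ∈ R.part x := R.mem_part (mem_univ x)
    rw [hx, hpb, mem_singleton] at hxx
    exact hxx
  have hchar : ∀ i j : Fin n, (toggle a b R).part i = (toggle a b R).part j ↔
      (R.part i = R.part j ∨ (R.part i = R.part a ∧ R.part j = R.part b)
        ∨ (R.part i = R.part b ∧ R.part j = R.part a)) :=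
    fun i j => (toggle_part_eq_iff a b R i j).trans (tfn_merge hpe i j)
  have hnotin : (a, b) ∉ pset R := by
    rw [mem_pset]
    rintro ⟨-, h⟩
    exact hpe h
  have hset : pset (toggle a b R) = insert (a, b) (pset R) := by
    ext ⟨i, j⟩
    rw [mem_insert, mem_pset, mem_pset]
    constructor
    · rintro ⟨hij, he⟩
      rcases (hchar i j).1 he with h | ⟨h1, h2⟩ | ⟨h1, h2⟩
      · exact Or.inr ⟨hij, h⟩
      · left
        rw [Prod.mk.injEq]
        exact ⟨hmema i h1, hmemb j h2⟩
      · exfalso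
        rw [hmemb i h1, hmema j h2] at hij
        exact lt_asymm hab hij
    · rintro (hc | ⟨hij, he⟩)
      · rw [Prod.mk.injEq] at hc
        obtain ⟨h1, h2⟩ := hc
        refine ⟨by rw [h1, h2]; exact hab, (hchar i j).2 (Or.inr (Or.inl ⟨by rw [h1], by rw [h2]⟩))⟩
      · exact ⟨hij, (hchar i j).2 (Or.inl he)⟩
  rw [kp, kp, hset, card_insert_of_notMem hnotin]

lemma sum_pow_kp_zero (Q : Pa n) (a b : Fin n) (hab : a < b) (hQab : Q.part a = Q.part b)
    (hQsub : Q.part a ⊆ {a, b}) :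
    ∑ R ∈ below Q, (-1 : ℤ) ^ kp R = 0 := by
  have habne : a ≠ b := ne_of_lt hab
  have hsub : ∀ R ∈ below Q, R.part a ⊆ {a, b} ∧ R.part b ⊆ {a, b} := by
    intro R hR
    refine ⟨(part_subset_of_rel (mem_below.1 hR) a).trans hQsub,
      (part_subset_of_rel (mem_below.1 hR) b).trans ?_⟩
    rw [← hQab]
    exact hQsub
  apply Finset.sum_involution (fun R _ => toggle a b R)
  · intro R hR
    obtain ⟨hRa, hRb⟩ := hsub R hR
    by_cases hpe : R.part a = R.part b
    · rw [kp_toggle_split hab hpe hRa, pow_succ]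
      ring
    · rw [kp_toggle_merge hab hpe hRa hRb, pow_succ]
      ring
  · intro R _ _
    exact toggle_ne habne
  · intro R hR
    exact mem_below.2 (toggle_rel (mem_below.1 hR) hQab)
  · intro R hR
    obtain ⟨hRa, hRb⟩ := hsub R hR
    exact toggle_toggle habne hRa hRb


lemma mu_matching (P : Pa n) (hP : ∀ t ∈ P.parts, t.card = 2) :
    ∀ Q : Pa n, rel Q P → mu Q = (-1 : ℤ) ^ kp Q := by
  suffices H : ∀ m : ℕ, ∀ Q : Pa n, (below Q).card = m → rel Q P → mu Q = (-1 : ℤ) ^ kp Q by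
    intro Q hQ
    exact H _ Q rfl hQ
  intro m
  induction m using Nat.strong_induction_on with
  | _ m IH =>
    intro Q hm hQP
    by_cases hd : disc Q
    · rw [kp_disc hd, pow_zero, mu_spec, if_pos hd]
      have hemp : (below Q).erase Q = ∅ := by
        rw [Finset.eq_empty_iff_forall_notMem]
        intro R hR
        obtain ⟨hne, hRQ⟩ := Finset.mem_erase.1 hR
        have hQR : rel Q R := fun i j h => by rw [hd i j h]
        exact hne (rel_antisymm (mem_below.1 hRQ) hQR)
      rw [hemp, Finset.sum_empty, sub_zero]
    · have hex : ∃ a b : Fin n, a < b ∧ Q.part a = Q.part b := by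
        unfold disc at hd
        push_neg at hd
        obtain ⟨i, j, hij, hne⟩ := hd
        rcases hne.lt_or_gt with h | h
        · exact ⟨i, j, h, hij⟩
        · exact ⟨j, i, h, hij.symm⟩
      obtain ⟨a, b, hab, hQab⟩ := hex
      have hbmem : b ∈ Q.part a := (mem_part_iff Q).2 hQab.symm
      have hQsub : Q.part a ⊆ {a, b} := by
        have hPsub : Q.part a ⊆ P.part a := part_subset_of_rel hQP a
        have hPcard : (P.part a).card = 2 := hP _ (P.part_mem.2 (mem_univ a))
        have habP : ({a, b} : Finset (Fin n)) ⊆ P.part a := by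
          intro x hx
          rcases mem_insert.1 hx with h | h
          · rw [h]
            exact hPsub (Q.mem_part (mem_univ a))
          · rw [mem_singleton] at h
            rw [h]
            exact hPsub hbmem
        have hPeq : {a, b} = P.part a := by
          apply Finset.eq_of_subset_of_card_le habP
          rw [Finset.card_pair (ne_of_lt hab)]
          exact le_of_eq hPcard
        exact hPsub.trans (le_of_eq hPeq.symm)
      have hz : ∑ R ∈ below Q, (-1 : ℤ) ^ kp R = 0 := sum_pow_kp_zero Q a b hab hQab hQsub
      have hIH : ∀ R ∈ (below Q).erase Q, mu R = (-1 : ℤ) ^ kp R := by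
        intro R hR
        obtain ⟨hne, hRQ⟩ := Finset.mem_erase.1 hR
        exact IH _ (hm ▸ below_card_lt (mem_below.1 hRQ) hne) R rfl
          (rel_trans (mem_below.1 hRQ) hQP)
      rw [mu_spec, if_neg hd, zero_sub, Finset.sum_congr rfl hIH]
      have h2 : (-1 : ℤ) ^ kp Q + ∑ R ∈ (below Q).erase Q, (-1 : ℤ) ^ kp R = 0 := by
        exact (Finset.add_sum_erase _ (fun R => (-1 : ℤ) ^ kp R) (self_mem_below Q)).trans hz
      linarith

end Stmt5Aux

/-- In the algebraic identity expressing the sum of `Λ(v_{1,l₁},…,v_{n,lₙ})` over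
pairwise distinct tuples as `∑_𝒫 C_𝒫 ∑_{(l_P)} Λ(v_{1,l_{𝒫(1)}},…,v_{n,l_{𝒫(n)}})`,
for `n` even, every partition all of whose blocks have exactly two elements
(a perfect matching) has coefficient `C_𝒫 = (−1)^{n/2}`. -/
theorem stmt5 (n : ℕ) (hn : 0 < n) (heven : Even n) :
    ∃ C : Finpartition (univ : Finset (Fin n)) → ℤ,
      (∀ (F : Type u) [Field F] (V : Fin n → Type v)
        [∀ j, AddCommGroup (V j)] [∀ j, Module F (V j)]
        (W : Type w) [AddCommGroup W] [Module F W]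
        (Λ : MultilinearMap F V W) (L : ℕ) (v : ∀ j, Fin L → V j),
        ∑ l ∈ (univ : Finset (Fin n → Fin L)).filter Function.Injective,
            Λ (fun j => v j (l j))
          = ∑ P : Finpartition (univ : Finset (Fin n)),
              C P • ∑ l ∈ (univ : Finset (Fin n → Fin L)).filter
                  (fun l => ∀ i j : Fin n, P.part i = P.part j → l i = l j),
                Λ (fun j => v j (l j)))
      ∧ ∀ P : Finpartition (univ : Finset (Fin n)),
          (∀ t ∈ P.parts, t.card = 2) → C P = (-1 : ℤ) ^ (n / 2) := by
  refine ⟨Stmt5Aux.mu, ?_, ?_⟩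
  · intro F _ V _ _ W _ _ Λ L v
    exact Stmt5Aux.identity W L (fun l => Λ (fun j => v j (l j)))
  · intro P hP
    rw [Stmt5Aux.mu_matching P hP P (Stmt5Aux.rel_refl P), Stmt5Aux.kp_matching P hP heven]
end

section
/- Let V be a real vector space with a symmetric positive bilinear form 𝔅, write 𝔅(v) := 𝔅(v,v)^{1/2}, and set Λ(u₁,…,u_{2r}) := 𝔅(u₁,u₂)⋯𝔅(u_{2r−1},u_{2r}). Let 𝒫 be a partition of {1,…,2r} and f₁,…,f_L ∈ V. Then |∑_{(l_P)_{P∈𝒫}} Λ(f_{l_{𝒫(1)}},…,f_{l_{𝒫(2r)}})| ≤ 𝔅(∑_l f_l)^{k₁} · ∏_{P ∈ 𝒫, #P ≥ 2} (∑_{l=1}^{L} 𝔅(f_l)^{#P}), where k₁ := #{P ∈ 𝒫 : #P = 1}. -/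
open Finset

section stmt10aux

variable {V : Type*} [AddCommGroup V] [Module ℝ V]

private lemma stmt10_cs (B : V →ₗ[ℝ] V →ₗ[ℝ] ℝ)
    (hsym : ∀ u v : V, B u v = B v u) (hpos : ∀ v : V, 0 ≤ B v v) (u v : V) :
    |B u v| ≤ Real.sqrt (B u u) * Real.sqrt (B v v) := by
  have key : ∀ x : ℝ, 0 ≤ B v v * (x * x) + (2 * B u v) * x + B u u := by
    intro x
    have h0 := hpos (u + x • v)
    simp only [map_add, map_smul, LinearMap.add_apply, LinearMap.smul_apply, smul_eq_mul] at h0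
    have heq : B v v * (x * x) + 2 * B u v * x + B u u
        = B u u + x * B v u + x * (B u v + x * B v v) := by rw [hsym u v]; ring
    rw [heq]; exact h0
  have hd := discrim_le_zero key
  rw [discrim] at hd
  have h2 : B u v ^ 2 ≤ B u u * B v v := by nlinarith
  calc |B u v| = Real.sqrt (B u v ^ 2) := (Real.sqrt_sq_eq_abs _).symm
    _ ≤ Real.sqrt (B u u * B v v) := Real.sqrt_le_sqrt h2
    _ = Real.sqrt (B u u) * Real.sqrt (B v v) := Real.sqrt_mul (hpos u) _

private lemma stmt10_prod_pair (r : ℕ) (a : ℕ → ℝ) :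
    ∏ i ∈ Finset.range r, (a (2 * i) * a (2 * i + 1)) = ∏ j ∈ Finset.range (2 * r), a j := by
  induction r with
  | zero => simp
  | succ n ih =>
    have h : 2 * (n + 1) = (2 * n + 1) + 1 := by ring
    rw [Finset.prod_range_succ, ih, h, Finset.prod_range_succ, Finset.prod_range_succ]
    ring

private noncomputable def nrm10 (B : V →ₗ[ℝ] V →ₗ[ℝ] ℝ) (v : V) : ℝ := Real.sqrt (B v v)

private def Aset10 {m L : ℕ} (P : Finpartition (univ : Finset (Fin m))) (hL : 0 < L)
    (s : Finset (Fin m)) : Finset (Fin m → Fin L) :=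
  univ.filter fun l => (∀ i j : Fin m, P.part i = P.part j → l i = l j) ∧
    ∀ j ∈ s, l j = ⟨0, hL⟩

private lemma mem_Aset10 {m L : ℕ} {P : Finpartition (univ : Finset (Fin m))} {hL : 0 < L}
    {s : Finset (Fin m)} {l : Fin m → Fin L} :
    l ∈ Aset10 P hL s ↔ (∀ i j : Fin m, P.part i = P.part j → l i = l j) ∧
      ∀ j ∈ s, l j = ⟨0, hL⟩ := by
  simp [Aset10]

private def Xval10 (B : V →ₗ[ℝ] V →ₗ[ℝ] ℝ) (r : ℕ) (w : Fin (2 * r) → V) : ℝ :=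
  ∏ i : Fin r, B (w ⟨2 * i.1, by omega⟩) (w ⟨2 * i.1 + 1, by omega⟩)

private def Wfun10 {m L : ℕ} (f : Fin L → V) (s : Finset (Fin m)) (l : Fin m → Fin L)
    (j : Fin m) : V :=
  if j ∈ s then ∑ v, f v else f (l j)

set_option maxHeartbeats 1000000 in
private lemma stmt10_perm (B : V →ₗ[ℝ] V →ₗ[ℝ] ℝ) {r L : ℕ} (f : Fin L → V)
    (s : Finset (Fin (2 * r))) (j₀ : Fin (2 * r)) (hj₀ : j₀ ∉ s)
    (m : Fin (2 * r) → Fin L) :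
    ∑ v : Fin L, Xval10 B r (Wfun10 f s (Function.update m j₀ v))
      = Xval10 B r (Wfun10 f (insert j₀ s) m) := by
  classical
  have hj₀lt := j₀.2
  obtain ⟨i₀, hpar⟩ : ∃ i₀ : Fin r, j₀.1 = 2 * i₀.1 ∨ j₀.1 = 2 * i₀.1 + 1 := by
    refine ⟨⟨j₀.1 / 2, by omega⟩, ?_⟩
    have : (⟨j₀.1 / 2, by omega⟩ : Fin r).1 = j₀.1 / 2 := rfl
    omega
  have hne : ∀ (j : Fin (2 * r)), j ≠ j₀ → ∀ v : Fin L,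
      Wfun10 f s (Function.update m j₀ v) j = Wfun10 f (insert j₀ s) m j := by
    intro j hj v
    simp [Wfun10, Function.update_of_ne hj, Finset.mem_insert, hj]
  have key : ∀ w : Fin (2 * r) → V, Xval10 B r w
      = B (w ⟨2 * i₀.1, by omega⟩) (w ⟨2 * i₀.1 + 1, by omega⟩)
        * ∏ i ∈ univ.erase i₀,
            B (w ⟨2 * i.1, by omega⟩) (w ⟨2 * i.1 + 1, by omega⟩) :=
    fun w => (Finset.mul_prod_erase univ _ (mem_univ i₀)).symm
  have herase : ∀ v : Fin L,
      (∏ i ∈ univ.erase i₀,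
        B (Wfun10 f s (Function.update m j₀ v) ⟨2 * i.1, by omega⟩)
          (Wfun10 f s (Function.update m j₀ v) ⟨2 * i.1 + 1, by omega⟩))
      = ∏ i ∈ univ.erase i₀,
          B (Wfun10 f (insert j₀ s) m ⟨2 * i.1, by omega⟩)
            (Wfun10 f (insert j₀ s) m ⟨2 * i.1 + 1, by omega⟩) := by
    intro v
    refine Finset.prod_congr rfl ?_
    intro i hi
    have hii : i.1 ≠ i₀.1 := by
      have h' := (Finset.mem_erase.mp hi).1
      exact fun h => h' (Fin.ext h)
    have h1 : (⟨2 * i.1, by omega⟩ : Fin (2 * r)) ≠ j₀ := by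
      intro h
      have := congrArg Fin.val h
      simp only at this
      omega
    have h2 : (⟨2 * i.1 + 1, by omega⟩ : Fin (2 * r)) ≠ j₀ := by
      intro h
      have := congrArg Fin.val h
      simp only at this
      omega
    rw [hne _ h1 v, hne _ h2 v]
  rcases hpar with hpar | hpar
  · have hj₀e : (⟨2 * i₀.1, by omega⟩ : Fin (2 * r)) = j₀ :=
      Fin.ext hpar.symm
    have hodd : (⟨2 * i₀.1 + 1, by omega⟩ : Fin (2 * r)) ≠ j₀ := by
      intro h
      have := congrArg Fin.val h
      simp only at this
      omega
    have hcenter1 : ∀ v : Fin L,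
        Wfun10 f s (Function.update m j₀ v) ⟨2 * i₀.1, by omega⟩ = f v := by
      intro v
      rw [hj₀e]
      simp [Wfun10, hj₀]
    have hcenter2 : Wfun10 f (insert j₀ s) m ⟨2 * i₀.1, by omega⟩
        = ∑ v, f v := by
      rw [hj₀e]
      simp [Wfun10]
    have hstep : ∀ v : Fin L, Xval10 B r (Wfun10 f s (Function.update m j₀ v))
        = B (f v) (Wfun10 f (insert j₀ s) m ⟨2 * i₀.1 + 1, by omega⟩)
          * ∏ i ∈ univ.erase i₀,
              B (Wfun10 f (insert j₀ s) m ⟨2 * i.1, by omega⟩)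
                (Wfun10 f (insert j₀ s) m ⟨2 * i.1 + 1, by omega⟩) := by
      intro v
      rw [key, herase v, hcenter1 v, hne _ hodd v]
    rw [Finset.sum_congr rfl (fun v _ => hstep v), ← Finset.sum_mul, ← LinearMap.sum_apply,
      ← map_sum, key (Wfun10 f (insert j₀ s) m), hcenter2]
  · have hj₀o : (⟨2 * i₀.1 + 1, by omega⟩ : Fin (2 * r)) = j₀ :=
      Fin.ext hpar.symm
    have heven : (⟨2 * i₀.1, by omega⟩ : Fin (2 * r)) ≠ j₀ := by
      intro h
      have := congrArg Fin.val h
      simp only at this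
      omega
    have hcenter1 : ∀ v : Fin L,
        Wfun10 f s (Function.update m j₀ v) ⟨2 * i₀.1 + 1, by omega⟩ = f v := by
      intro v
      rw [hj₀o]
      simp [Wfun10, hj₀]
    have hcenter2 : Wfun10 f (insert j₀ s) m ⟨2 * i₀.1 + 1, by omega⟩
        = ∑ v, f v := by
      rw [hj₀o]
      simp [Wfun10]
    have hstep : ∀ v : Fin L, Xval10 B r (Wfun10 f s (Function.update m j₀ v))
        = B (Wfun10 f (insert j₀ s) m ⟨2 * i₀.1, by omega⟩) (f v)
          * ∏ i ∈ univ.erase i₀,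
              B (Wfun10 f (insert j₀ s) m ⟨2 * i.1, by omega⟩)
                (Wfun10 f (insert j₀ s) m ⟨2 * i.1 + 1, by omega⟩) := by
      intro v
      rw [key, herase v, hcenter1 v, hne _ heven v]
    rw [Finset.sum_congr rfl (fun v _ => hstep v), ← Finset.sum_mul, ← map_sum,
      key (Wfun10 f (insert j₀ s) m), hcenter2]


set_option maxHeartbeats 1000000 in
private lemma stmt10_fub (B : V →ₗ[ℝ] V →ₗ[ℝ] ℝ) {r L : ℕ}
    (P : Finpartition (univ : Finset (Fin (2 * r)))) (hL : 0 < L) (f : Fin L → V)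
    (s : Finset (Fin (2 * r))) (hs : ∀ j ∈ s, (P.part j).card = 1) :
    ∑ l ∈ Aset10 P hL ∅, Xval10 B r (Wfun10 f ∅ l)
      = ∑ l ∈ Aset10 P hL s, Xval10 B r (Wfun10 f s l) := by
  classical
  revert hs
  induction s using Finset.induction_on with
  | empty => intro _; rfl
  | @insert j₀ s hj₀ ih =>
    intro hs
    rw [ih (fun j hj => hs j (Finset.mem_insert_of_mem hj))]
    have hj0card : (P.part j₀).card = 1 := hs j₀ (mem_insert_self _ _)
    have hpartj₀ : P.part j₀ = {j₀} := by
      obtain ⟨a, ha⟩ := Finset.card_eq_one.mp hj0card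
      have hmem := P.mem_part (mem_univ j₀)
      rw [ha, Finset.mem_singleton] at hmem
      rw [ha, hmem]
    have huniq : ∀ i : Fin (2 * r), P.part i = P.part j₀ → i = j₀ := by
      intro i h
      have hmi := P.mem_part (mem_univ i)
      rw [h, hpartj₀, Finset.mem_singleton] at hmi
      exact hmi
    have hupd : ∀ (l : Fin (2 * r) → Fin L) (c : Fin L),
        (∀ i j, P.part i = P.part j → l i = l j) →
        ∀ i j, P.part i = P.part j → Function.update l j₀ c i = Function.update l j₀ c j := by
      intro l c hc i j hij
      by_cases hi : i = j₀
      · by_cases hj : j = j₀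
        · rw [hi, hj]
        · exact absurd (huniq j (by rw [← hij, hi])) hj
      · by_cases hj : j = j₀
        · exact absurd (huniq i (by rw [hij, hj])) hi
        · rw [Function.update_of_ne hi, Function.update_of_ne hj]
          exact hc i j hij
    rw [← Finset.sum_fiberwise (Aset10 P hL s) (fun l => l j₀)
        (fun l => Xval10 B r (Wfun10 f s l))]
    have step1 : ∀ v : Fin L,
        ∑ l ∈ (Aset10 P hL s).filter (fun l => l j₀ = v), Xval10 B r (Wfun10 f s l)
          = ∑ m ∈ Aset10 P hL (insert j₀ s),
              Xval10 B r (Wfun10 f s (Function.update m j₀ v)) := by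
      intro v
      refine Finset.sum_nbij' (i := fun l => Function.update l j₀ (⟨0, hL⟩ : Fin L))
        (j := fun m => Function.update m j₀ v) ?_ ?_ ?_ ?_ ?_
      · intro l hl
        obtain ⟨hl, hv⟩ := Finset.mem_filter.mp hl
        obtain ⟨hc, hz⟩ := mem_Aset10.mp hl
        refine mem_Aset10.mpr ⟨hupd l _ hc, ?_⟩
        intro j hj
        rcases Finset.mem_insert.mp hj with hj' | hj'
        · rw [hj']
          exact Function.update_self _ _ _
        · have hjj : j ≠ j₀ := fun h => hj₀ (h ▸ hj')
          rw [Function.update_of_ne hjj]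
          exact hz j hj'
      · intro m hm
        obtain ⟨hc, hz⟩ := mem_Aset10.mp hm
        refine Finset.mem_filter.mpr ⟨mem_Aset10.mpr ⟨hupd m _ hc, ?_⟩,
          Function.update_self _ _ _⟩
        intro j hj
        have hjj : j ≠ j₀ := fun h => hj₀ (h ▸ hj)
        rw [Function.update_of_ne hjj]
        exact hz j (Finset.mem_insert_of_mem hj)
      · intro l hl
        obtain ⟨-, hv⟩ := Finset.mem_filter.mp hl
        rw [Function.update_idem, ← hv, Function.update_eq_self]
      · intro m hm
        obtain ⟨-, hz⟩ := mem_Aset10.mp hm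
        rw [Function.update_idem, ← hz j₀ (mem_insert_self _ _), Function.update_eq_self]
      · intro l hl
        obtain ⟨-, hv⟩ := Finset.mem_filter.mp hl
        rw [Function.update_idem, ← hv, Function.update_eq_self]
    simp only [step1]
    rw [Finset.sum_comm]
    exact Finset.sum_congr rfl fun m _ => stmt10_perm B f s j₀ hj₀ m


private lemma stmt10_pair (B : V →ₗ[ℝ] V →ₗ[ℝ] ℝ) {r : ℕ} (w : Fin (2 * r) → V) :
    (∏ i : Fin r, (nrm10 B (w ⟨2 * i.1, by omega⟩)
        * nrm10 B (w ⟨2 * i.1 + 1, by omega⟩)))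
      = ∏ j : Fin (2 * r), nrm10 B (w j) := by
  classical
  set a : ℕ → ℝ := fun j => if h : j < 2 * r then nrm10 B (w ⟨j, h⟩) else 1 with ha
  have h1 : ∏ j : Fin (2 * r), nrm10 B (w j) = ∏ j ∈ Finset.range (2 * r), a j := by
    rw [← Fin.prod_univ_eq_prod_range a (2 * r)]
    refine Finset.prod_congr rfl fun j _ => ?_
    rw [ha]
    dsimp only
    rw [dif_pos j.2]
  have h2 : ∀ i : Fin r,
      nrm10 B (w ⟨2 * i.1, by omega⟩)
          * nrm10 B (w ⟨2 * i.1 + 1, by omega⟩)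
        = a (2 * i.1) * a (2 * i.1 + 1) := by
    intro i
    have e1 : a (2 * i.1) = nrm10 B (w ⟨2 * i.1, by omega⟩) := by
      rw [ha]
      exact dif_pos _
    have e2 : a (2 * i.1 + 1) = nrm10 B (w ⟨2 * i.1 + 1, by omega⟩) := by
      rw [ha]
      exact dif_pos _
    rw [e1, e2]
  rw [Finset.prod_congr rfl fun i _ => h2 i, h1]
  exact (Fin.prod_univ_eq_prod_range (fun i => a (2 * i) * a (2 * i + 1)) r).trans
    (stmt10_prod_pair r a)

end stmt10aux

set_option maxHeartbeats 2000000 in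
/-- For a symmetric positive bilinear form `𝔅` (with `𝔅(v) := 𝔅(v,v)^{1/2}`) and
`Λ(u₁,…,u_{2r}) = 𝔅(u₁,u₂)⋯𝔅(u_{2r−1},u_{2r})`, for any partition `𝒫` of `{1,…,2r}`
and `f₁,…,f_L ∈ V`,
`|∑_{(l_P)_{P∈𝒫}} Λ(f_{l_{𝒫(1)}},…,f_{l_{𝒫(2r)}})| ≤ 𝔅(∑_l f_l)^{k₁} · ∏_{P∈𝒫, #P≥2} ∑_l 𝔅(f_l)^{#P}`,
where `k₁` is the number of singleton blocks of `𝒫`.  The sum over independent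
block indices is encoded as the sum over tuples `l : Fin (2r) → Fin L` constant
on the blocks of `𝒫`. -/
theorem stmt10 (V : Type*) [AddCommGroup V] [Module ℝ V]
    (B : V →ₗ[ℝ] V →ₗ[ℝ] ℝ)
    (hsym : ∀ u v : V, B u v = B v u) (hpos : ∀ v : V, 0 ≤ B v v)
    (r : ℕ) (hr : 0 < r)
    (P : Finpartition (univ : Finset (Fin (2 * r))))
    (L : ℕ) (f : Fin L → V) :
    |∑ l ∈ (univ : Finset (Fin (2 * r) → Fin L)).filter
          (fun l => ∀ i j : Fin (2 * r), P.part i = P.part j → l i = l j),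
        ∏ i : Fin r,
          B (f (l ⟨2 * i.1, by have := i.isLt; omega⟩))
            (f (l ⟨2 * i.1 + 1, by have := i.isLt; omega⟩))|
      ≤ Real.sqrt (B (∑ l : Fin L, f l) (∑ l : Fin L, f l))
            ^ (P.parts.filter (fun t => t.card = 1)).card
          * ∏ t ∈ P.parts.filter (fun t => 2 ≤ t.card),
              ∑ l : Fin L, Real.sqrt (B (f l) (f l)) ^ t.card := by
  classical
  have hRHS0 : (0:ℝ) ≤ Real.sqrt (B (∑ l : Fin L, f l) (∑ l : Fin L, f l))
      ^ (P.parts.filter (fun t => t.card = 1)).card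
      * ∏ t ∈ P.parts.filter (fun t => 2 ≤ t.card),
          ∑ l : Fin L, Real.sqrt (B (f l) (f l)) ^ t.card := by
    refine mul_nonneg (pow_nonneg (Real.sqrt_nonneg _) _) (Finset.prod_nonneg fun t _ => ?_)
    exact Finset.sum_nonneg fun l _ => pow_nonneg (Real.sqrt_nonneg _) _
  rcases Nat.eq_zero_or_pos L with rfl | hL
  · haveI : IsEmpty (Fin (2 * r) → Fin 0) :=
      ⟨fun l => (l ⟨0, by omega⟩).elim0⟩
    rw [Finset.eq_empty_of_isEmpty ((univ : Finset (Fin (2 * r) → Fin 0)).filter _),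
      Finset.sum_empty, abs_zero]
    exact hRHS0
  -- notation
  set s₁ : Finset (Fin (2 * r)) := univ.filter (fun j => (P.part j).card = 1) with hs₁
  set T : Finset (Finset (Fin (2 * r))) := P.parts.filter (fun t => 2 ≤ t.card) with hT
  set rep : Finset (Fin (2 * r)) → Fin (2 * r) :=
    fun t => if h : t.Nonempty then t.min' h else ⟨0, by omega⟩ with hrepdef
  have hrepmem : ∀ t ∈ P.parts, rep t ∈ t := by
    intro t ht
    rw [hrepdef]
    dsimp only
    rw [dif_pos (P.nonempty_of_mem_parts ht)]
    exact Finset.min'_mem _ _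
  have hcard1 : ∀ j : Fin (2 * r), 0 < (P.part j).card :=
    fun j => Finset.card_pos.mpr (P.nonempty_of_mem_parts (P.part_mem.mpr (mem_univ j)))
  -- Step 1: rewrite LHS via fub
  have hLHS : ∑ l ∈ (univ : Finset (Fin (2 * r) → Fin L)).filter
          (fun l => ∀ i j : Fin (2 * r), P.part i = P.part j → l i = l j),
        ∏ i : Fin r,
          B (f (l ⟨2 * i.1, by have := i.isLt; omega⟩))
            (f (l ⟨2 * i.1 + 1, by have := i.isLt; omega⟩))
      = ∑ l ∈ Aset10 P hL s₁, Xval10 B r (Wfun10 f s₁ l) := by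
    have h0 : (univ : Finset (Fin (2 * r) → Fin L)).filter
          (fun l => ∀ i j : Fin (2 * r), P.part i = P.part j → l i = l j)
        = Aset10 P hL ∅ := by
      apply Finset.filter_congr
      intro l _
      simp
    rw [h0]
    have h0' : ∀ l : Fin (2 * r) → Fin L,
        (∏ i : Fin r, B (f (l ⟨2 * i.1, by have := i.isLt; omega⟩))
            (f (l ⟨2 * i.1 + 1, by have := i.isLt; omega⟩)))
          = Xval10 B r (Wfun10 f ∅ l) := by
      intro l
      unfold Xval10
      refine Finset.prod_congr rfl fun i _ => ?_
      simp [Wfun10]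
    rw [Finset.sum_congr rfl fun l _ => h0' l]
    refine stmt10_fub B P hL f s₁ ?_
    intro j hj
    rw [hs₁] at hj
    exact (Finset.mem_filter.mp hj).2
  rw [hLHS]
  -- Step 2: termwise bound
  have habs := Finset.abs_sum_le_sum_abs
    (fun l => Xval10 B r (Wfun10 f s₁ l)) (Aset10 P hL s₁)
  refine habs.trans ?_
  have hterm : ∀ l ∈ Aset10 P hL s₁, |Xval10 B r (Wfun10 f s₁ l)|
      ≤ nrm10 B (∑ v : Fin L, f v) ^ s₁.card
        * ∏ t ∈ T, nrm10 B (f (l (rep t))) ^ t.card := by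
    intro l hl
    obtain ⟨hconst, -⟩ := mem_Aset10.mp hl
    have hCS : |Xval10 B r (Wfun10 f s₁ l)|
        ≤ ∏ i : Fin r, (nrm10 B (Wfun10 f s₁ l ⟨2 * i.1, by have := i.2; omega⟩)
            * nrm10 B (Wfun10 f s₁ l ⟨2 * i.1 + 1, by have := i.2; omega⟩)) := by
      rw [Xval10, Finset.abs_prod]
      exact Finset.prod_le_prod (fun i _ => abs_nonneg _)
        (fun i _ => stmt10_cs B hsym hpos _ _)
    refine hCS.trans ?_
    rw [stmt10_pair B (Wfun10 f s₁ l)]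
    rw [← Finset.prod_filter_mul_prod_filter_not univ (fun j => (P.part j).card = 1)
      (fun j => nrm10 B (Wfun10 f s₁ l j))]
    have hpart1 : ∏ j ∈ univ.filter (fun j : Fin (2 * r) => (P.part j).card = 1),
        nrm10 B (Wfun10 f s₁ l j) = nrm10 B (∑ v : Fin L, f v) ^ s₁.card := by
      rw [← hs₁]
      rw [Finset.prod_congr rfl (fun j hj => ?_), Finset.prod_const]
      have : j ∈ s₁ := hj
      rw [Wfun10, if_pos this]
    have hbiU : univ.filter (fun j : Fin (2 * r) => ¬ (P.part j).card = 1) = T.biUnion id := by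
      ext j
      simp only [Finset.mem_filter, Finset.mem_univ, true_and, Finset.mem_biUnion, hT, id]
      constructor
      · intro h
        exact ⟨P.part j, ⟨P.part_mem.mpr (mem_univ j), by have := hcard1 j; omega⟩,
          P.mem_part (mem_univ j)⟩
      · rintro ⟨t, ht, hjt⟩
        rw [P.part_eq_of_mem ht.1 hjt]
        omega
    have hdisj : (T : Set (Finset (Fin (2 * r)))).PairwiseDisjoint id := by
      refine (P.supIndep.pairwiseDisjoint).subset ?_
      rw [hT]
      exact_mod_cast Finset.coe_subset.mpr (Finset.filter_subset _ _)
    have hpart2 : ∏ j ∈ univ.filter (fun j : Fin (2 * r) => ¬ (P.part j).card = 1),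
        nrm10 B (Wfun10 f s₁ l j) = ∏ t ∈ T, nrm10 B (f (l (rep t))) ^ t.card := by
      rw [hbiU, Finset.prod_biUnion hdisj]
      refine Finset.prod_congr rfl fun t ht => ?_
      have htp : t ∈ P.parts := (Finset.mem_filter.mp ht).1
      have htc : 2 ≤ t.card := (Finset.mem_filter.mp ht).2
      rw [Finset.prod_congr rfl (fun j hj => ?_), Finset.prod_const, id]
      have hpj : P.part j = t := P.part_eq_of_mem htp (by simpa using hj)
      have hjs : j ∉ s₁ := by
        rw [hs₁]
        simp only [Finset.mem_filter, Finset.mem_univ, true_and, hpj]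
        omega
      have hrt : P.part (rep t) = t := P.part_eq_of_mem htp (hrepmem t htp)
      rw [Wfun10, if_neg hjs, hconst j (rep t) (by rw [hpj, hrt])]
    rw [hpart1, hpart2]
  refine (Finset.sum_le_sum hterm).trans ?_
  rw [← Finset.mul_sum]
  -- Step 3: distribute the sum over blocks
  have hsum : ∑ l ∈ Aset10 P hL s₁, ∏ t ∈ T, nrm10 B (f (l (rep t))) ^ t.card
      = ∏ t ∈ T, ∑ v : Fin L, nrm10 B (f v) ^ t.card := by
    rw [Finset.prod_sum T (fun _ => (univ : Finset (Fin L)))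
      (fun t v => nrm10 B (f v) ^ t.card)]
    refine Finset.sum_nbij' (i := fun l => fun t _ => l (rep t))
      (j := fun p => fun j => if h : P.part j ∈ T then p (P.part j) h else ⟨0, hL⟩)
      ?_ ?_ ?_ ?_ ?_
    · intro l _
      exact Finset.mem_pi.mpr fun t ht => Finset.mem_univ _
    · intro p _
      refine mem_Aset10.mpr ⟨?_, ?_⟩
      · intro i j hij
        rw [hij]
      · intro j hj
        have : P.part j ∉ T := by
          rw [hT]
          have : (P.part j).card = 1 := by
            rw [hs₁] at hj
            exact (Finset.mem_filter.mp hj).2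
          simp only [Finset.mem_filter, this]
          omega
        rw [dif_neg this]
    · intro l hl
      obtain ⟨hconst, hz⟩ := mem_Aset10.mp hl
      funext j
      dsimp only
      by_cases h : P.part j ∈ T
      · rw [dif_pos h]
        have htp : P.part j ∈ P.parts := P.part_mem.mpr (mem_univ j)
        have hrt : P.part (rep (P.part j)) = P.part j :=
          P.part_eq_of_mem htp (hrepmem _ htp)
        exact hconst _ _ hrt
      · rw [dif_neg h]
        have hjcard : (P.part j).card = 1 := by
          rw [hT] at h
          simp only [Finset.mem_filter, P.part_mem.mpr (mem_univ j), true_and] at h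
          have := hcard1 j
          omega
        exact (hz j (by rw [hs₁]; simp [hjcard])).symm
    · intro p hp
      funext t ht
      dsimp only
      have htT : t ∈ P.parts.filter (fun t => 2 ≤ t.card) := by rw [← hT]; exact ht
      have htp : t ∈ P.parts := (Finset.mem_filter.mp htT).1
      have hrt : P.part (rep t) = t := P.part_eq_of_mem htp (hrepmem t htp)
      rw [dif_pos (by rw [hrt]; exact ht)]
      congr 1
    · intro l _
      exact (Finset.prod_attach T (fun t => nrm10 B (f (l (rep t))) ^ t.card)).symm
  rw [hsum]
  -- Step 4: identify the cardinalities
  have hcard : s₁.card = (P.parts.filter (fun t => t.card = 1)).card := by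
    refine Finset.card_nbij (i := fun j => P.part j) ?_ ?_ ?_
    · intro j hj
      rw [hs₁] at hj
      exact Finset.mem_filter.mpr ⟨P.part_mem.mpr (mem_univ j), (Finset.mem_filter.mp hj).2⟩
    · intro i hi j hj hij
      have hij' : P.part i = P.part j := hij
      simp only [Finset.mem_coe, hs₁, Finset.mem_filter] at hi hj
      obtain ⟨a, ha⟩ := Finset.card_eq_one.mp hi.2
      have h1 := P.mem_part (mem_univ i)
      have h2 := P.mem_part (mem_univ j)
      rw [ha, Finset.mem_singleton] at h1
      rw [← hij', ha, Finset.mem_singleton] at h2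
      rw [h1, h2]
    · intro t ht
      simp only [Finset.mem_coe, Finset.mem_filter] at ht
      obtain ⟨a, ha⟩ := Finset.card_eq_one.mp ht.2
      have hpa : P.part a = t :=
        P.part_eq_of_mem ht.1 (by rw [ha]; exact Finset.mem_singleton_self a)
      refine ⟨a, ?_, hpa⟩
      simp only [Finset.mem_coe, hs₁, Finset.mem_filter]
      exact ⟨mem_univ a, by rw [hpa]; exact ht.2⟩
  rw [← hcard, hT]
  simp only [nrm10]
  exact le_rfl
end

section
/- Let (X, μ) be a probability space, r, L ∈ ℕ₊, C > 0, and let 𝒵 be a subset of 𝒵_IV := {(l₁,…,l_{2r}) ∈ {1,…,L}^{2r} : l₁,…,l_{2r} pairwise distinct}. Suppose that every family of real-valued functions f₁,…,f_L ∈ L^{2r}(X) satisfying ∫_X f_{l₁}⋯f_{l_{2r}} dμ = 0 for all (l₁,…,l_{2r}) ∈ 𝒵 obeys ‖∑_{l=1}^L f_l‖_{2r} ≤ C ‖(∑_{l=1}^L |f_l|²)^{1/2}‖_{2r}. Then #𝒵 ≥ c_{r,C} · #𝒵_IV for some constant c_{r,C} > 0 depending only on r and C (assuming L ≥ max(2r,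 ⌊C²⌋+1)). -/
open Finset MeasureTheory ENNReal

/-- Sharpness of the vanishing set for the direct inequality: for `r ∈ ℕ₊` and
`C > 0` there is `c_{r,C} > 0` such that for any probability space `(X,μ)`,
any `L ≥ max(2r, ⌊C²⌋+1)`, and any set `𝒵` of pairwise-distinct-entry tuples in
`{1,…,L}^{2r}`, if every family `f₁,…,f_L ∈ L^{2r}(X)` of real-valued functions
with `∫ f_{l₁}⋯f_{l_{2r}} dμ = 0` for all tuples in `𝒵` satisfies
`‖∑ f_l‖_{2r} ≤ C‖(∑ |f_l|²)^{1/2}‖_{2r}`, then `#𝒵 ≥ c_{r,C} · #𝒵_IV`. -/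
theorem stmt16 (r : ℕ) (hr : 0 < r) (C : ℝ) (hC : 0 < C) :
    ∃ c : ℝ, 0 < c ∧
      ∀ (X : Type u) [MeasurableSpace X] (μ : Measure X) [IsProbabilityMeasure μ]
        (L : ℕ), 2 * r ≤ L → Nat.floor (C ^ 2) + 1 ≤ L →
        ∀ Z : Finset (Fin (2 * r) → Fin L),
        (∀ t ∈ Z, Function.Injective t) →
        (∀ f : Fin L → X → ℝ, (∀ l, MemLp (f l) (2 * r : ℝ≥0∞) μ) →
          (∀ t ∈ Z, ∫ x, ∏ j : Fin (2 * r), f (t j) x ∂μ = 0) →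
          (∫ x, |∑ l : Fin L, f l x| ^ (2 * r) ∂μ) ^ (1 / (2 * r : ℝ))
            ≤ C * (∫ x, (∑ l : Fin L, |f l x| ^ 2) ^ r ∂μ) ^ (1 / (2 * r : ℝ))) →
        c * (((univ : Finset (Fin (2 * r) → Fin L)).filter
              Function.Injective).card : ℝ)
          ≤ (Z.card : ℝ) := by
  classical
  set m : ℕ := Nat.floor (C ^ 2) + 1 with hmdef
  refine ⟨1 / (m.descFactorial (2 * r) + 1), by positivity, ?_⟩
  intro X _ μ _ L h2r hmL Z hinjZ hyp
  have hm1 : 1 ≤ m := Nat.le_add_left 1 _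
  have hL0 : 0 < L := lt_of_lt_of_le hm1 hmL
  -- Key claim: every m-element subset of Fin L contains a tuple of Z
  have key : ∀ S : Finset (Fin L), S.card = m → ∃ t ∈ Z, ∀ j, t j ∈ S := by
    intro S hS
    by_contra hno
    push_neg at hno
    set f : Fin L → X → ℝ := fun l _ => if l ∈ S then 1 else 0 with hf
    have hmem : ∀ l, MemLp (f l) (2 * r : ℝ≥0∞) μ := fun l => memLp_const _
    have hvan : ∀ t ∈ Z, ∫ x, ∏ j : Fin (2 * r), f (t j) x ∂μ = 0 := by
      intro t ht
      obtain ⟨j, hj⟩ := hno t ht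
      have hz : ∀ x : X, ∏ j : Fin (2 * r), f (t j) x = 0 := fun x =>
        Finset.prod_eq_zero (mem_univ j) (by simp [hf, hj])
      rw [integral_congr_ae (Filter.Eventually.of_forall hz), integral_zero]
    have hIneq := hyp f hmem hvan
    set M : ℝ := (m : ℝ) with hMdef
    have hM0 : (0 : ℝ) < M := by positivity
    have hsum : ∀ x : X, ∑ l : Fin L, f l x = M := by
      intro x
      simp only [hf]
      rw [Finset.sum_ite_mem, univ_inter, Finset.sum_const, hS]
      simp [hMdef]
    have hsq : ∀ x : X, ∑ l : Fin L, |f l x| ^ 2 = M := by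
      intro x
      have h1 : ∀ l, |f l x| ^ 2 = if l ∈ S then (1 : ℝ) else 0 := by
        intro l; by_cases h : l ∈ S <;> simp [hf, h]
      simp only [h1]
      rw [Finset.sum_ite_mem, univ_inter, Finset.sum_const, hS]
      simp [hMdef]
    have hlhs : (∫ x, |∑ l : Fin L, f l x| ^ (2 * r) ∂μ) = M ^ (2 * r) := by
      rw [integral_congr_ae (Filter.Eventually.of_forall
        (fun x => by rw [hsum x] : ∀ x : X, |∑ l : Fin L, f l x| ^ (2 * r) = |M| ^ (2 * r)))]
      rw [abs_of_nonneg hM0.le, integral_const]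
      simp
    have hrhs : (∫ x, (∑ l : Fin L, |f l x| ^ 2) ^ r ∂μ) = M ^ r := by
      rw [integral_congr_ae (Filter.Eventually.of_forall
        (fun x => by rw [hsq x] : ∀ x : X, (∑ l : Fin L, |f l x| ^ 2) ^ r = M ^ r))]
      rw [integral_const]; simp
    rw [hlhs, hrhs] at hIneq
    have hr0 : (r : ℝ) ≠ 0 := Nat.cast_ne_zero.mpr hr.ne'
    have e1 : (M ^ (2 * r) : ℝ) ^ (1 / (2 * r : ℝ)) = M := by
      rw [← Real.rpow_natCast M (2 * r), ← Real.rpow_mul hM0.le,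
        show ((2 * r : ℕ) : ℝ) * (1 / (2 * r : ℝ)) = 1 by push_cast; field_simp,
        Real.rpow_one]
    have e2 : (M ^ r : ℝ) ^ (1 / (2 * r : ℝ)) = Real.sqrt M := by
      rw [← Real.rpow_natCast M r, ← Real.rpow_mul hM0.le,
        show ((r : ℕ) : ℝ) * (1 / (2 * r : ℝ)) = 1 / 2 by field_simp,
        ← Real.sqrt_eq_rpow]
    rw [e1, e2] at hIneq
    have hspos : 0 < Real.sqrt M := Real.sqrt_pos.mpr hM0
    have hmulself : Real.sqrt M * Real.sqrt M = M := Real.mul_self_sqrt hM0.le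
    have hsC : Real.sqrt M ≤ C := by nlinarith
    have hMC2 : M ≤ C ^ 2 := by nlinarith
    have hC2M : C ^ 2 < M := by
      have h := Nat.lt_floor_add_one (C ^ 2)
      have : M = (Nat.floor (C ^ 2) : ℝ) + 1 := by rw [hMdef, hmdef]; push_cast; ring
      linarith
    linarith
  -- number of injective tuples
  have hIVcard : ((univ : Finset (Fin (2 * r) → Fin L)).filter Function.Injective).card
      = L.descFactorial (2 * r) := by
    have h1 : ((univ : Finset (Fin (2 * r) → Fin L)).filter Function.Injective).card
        = Fintype.card {f : Fin (2 * r) → Fin L // Function.Injective f} := by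
      rw [Fintype.card_subtype]
    rw [h1, Fintype.card_congr (Equiv.subtypeInjectiveEquivEmbedding _ _),
      Fintype.card_embedding_eq, Fintype.card_fin, Fintype.card_fin]
  by_cases h2rm : 2 * r ≤ m
  · -- double counting
    set T : (Fin (2 * r) → Fin L) → Finset (Fin L) := fun t => Finset.image t univ with hT
    have hTcard : ∀ t ∈ Z, (T t).card = 2 * r := by
      intro t ht
      rw [hT, Finset.card_image_of_injective _ (hinjZ t ht), card_univ, Fintype.card_fin]
    set g : Finset (Fin L) → (Fin (2 * r) → Fin L) := fun S =>
      if h : ∃ t ∈ Z, ∀ j, t j ∈ S then h.choose else fun _ => ⟨0, hL0⟩ with hg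
    have hgspec : ∀ S ∈ (univ : Finset (Fin L)).powersetCard m,
        g S ∈ Z ∧ ∀ j, g S j ∈ S := by
      intro S hS
      rw [mem_powersetCard] at hS
      have hex := key S hS.2
      rw [hg]
      simp only [dif_pos hex]
      exact hex.choose_spec
    have hcount : ((univ : Finset (Fin L)).powersetCard m).card
        ≤ (L - 2 * r).choose (m - 2 * r) * Z.card := by
      apply Finset.card_le_mul_card_image_of_maps_to (fun S hS => (hgspec S hS).1)
      intro t ht
      -- fiber over t injects into powersetCard (m - 2r) (univ \ T t)
      have hsub : ∀ S ∈ ((univ : Finset (Fin L)).powersetCard m).filter (fun S => g S = t),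
          S \ T t ∈ (univ \ T t).powersetCard (m - 2 * r) := by
        intro S hS
        rw [mem_filter] at hS
        obtain ⟨hS1, hS2⟩ := hS
        rw [mem_powersetCard] at hS1 ⊢
        have hTS : T t ⊆ S := by
          intro a ha
          rw [hT] at ha
          simp only [Finset.mem_image, mem_univ, true_and] at ha
          obtain ⟨j, rfl⟩ := ha
          have := (hgspec S (mem_powersetCard.mpr hS1)).2 j
          rwa [hS2] at this
        refine ⟨sdiff_subset_sdiff (subset_univ S) le_rfl, ?_⟩
        rw [card_sdiff_of_subset hTS, hS1.2, hTcard t ht]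
      have hinjfib : Set.InjOn (fun S => S \ T t)
          ↑(((univ : Finset (Fin L)).powersetCard m).filter (fun S => g S = t)) := by
        intro S₁ h₁ S₂ h₂ heq
        simp only [Finset.coe_filter, Set.mem_setOf_eq] at h₁ h₂
        have hTS : ∀ S, S ∈ (univ : Finset (Fin L)).powersetCard m → g S = t → T t ⊆ S := by
          intro S hS hgS
          intro a ha
          rw [hT] at ha
          simp only [Finset.mem_image, mem_univ, true_and] at ha
          obtain ⟨j, rfl⟩ := ha
          have := (hgspec S hS).2 j
          rwa [hgS] at this
        have e₁ := Finset.sdiff_union_of_subset (hTS S₁ h₁.1 h₁.2)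
        have e₂ := Finset.sdiff_union_of_subset (hTS S₂ h₂.1 h₂.2)
        rw [← e₁, ← e₂]
        simp only at heq
        rw [heq]
      calc (((univ : Finset (Fin L)).powersetCard m).filter (fun S => g S = t)).card
          ≤ ((univ \ T t).powersetCard (m - 2 * r)).card :=
            Finset.card_le_card_of_injOn _ hsub hinjfib
        _ = (L - 2 * r).choose (m - 2 * r) := by
            rw [card_powersetCard, card_sdiff_of_subset (subset_univ _), card_univ, Fintype.card_fin,
              hTcard t ht]
    rw [card_powersetCard, card_univ, Fintype.card_fin] at hcount
    -- Nat arithmetic: descFactorial L (2r) ≤ Z.card * descFactorial m (2r)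
    have hmLe : m ≤ L := hmL
    have hkey : L.descFactorial (2 * r) ≤ Z.card * m.descFactorial (2 * r) := by
      have hdd : (L - 2 * r).descFactorial (m - 2 * r) * L.descFactorial (2 * r)
          = L.descFactorial m := Nat.descFactorial_mul_descFactorial h2rm
      have hfc1 : (L - 2 * r).descFactorial (m - 2 * r)
          = Nat.factorial (m - 2 * r) * (L - 2 * r).choose (m - 2 * r) :=
        Nat.descFactorial_eq_factorial_mul_choose _ _
      have hfc2 : L.descFactorial m = Nat.factorial m * L.choose m :=
        Nat.descFactorial_eq_factorial_mul_choose _ _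
      have hfm : Nat.factorial (m - 2 * r) * m.descFactorial (2 * r) = Nat.factorial m :=
        Nat.factorial_mul_descFactorial h2rm
      have hpos : 0 < (L - 2 * r).descFactorial (m - 2 * r) := by
        rw [Nat.descFactorial_eq_factorial_mul_choose]
        exact Nat.mul_pos (Nat.factorial_pos _) (Nat.choose_pos (by omega))
      have hmain : (L - 2 * r).descFactorial (m - 2 * r) * L.descFactorial (2 * r)
          ≤ (L - 2 * r).descFactorial (m - 2 * r) * (Z.card * m.descFactorial (2 * r)) := by
        calc (L - 2 * r).descFactorial (m - 2 * r) * L.descFactorial (2 * r)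
            = L.descFactorial m := hdd
          _ = Nat.factorial m * L.choose m := hfc2
          _ ≤ Nat.factorial m * ((L - 2 * r).choose (m - 2 * r) * Z.card) :=
              Nat.mul_le_mul_left _ hcount
          _ = (L - 2 * r).descFactorial (m - 2 * r) * (Z.card * m.descFactorial (2 * r)) := by
              rw [hfc1, ← hfm]; ring
      exact Nat.le_of_mul_le_mul_left hmain hpos
    -- conclude in ℝ
    rw [hIVcard]
    rw [div_mul_eq_mul_div, one_mul, div_le_iff₀ (by positivity)]
    have hcast : (L.descFactorial (2 * r) : ℝ) ≤ (Z.card : ℝ) * (m.descFactorial (2 * r) : ℝ) := by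
      exact_mod_cast hkey
    have : (Z.card : ℝ) * (m.descFactorial (2 * r) : ℝ)
        ≤ (Z.card : ℝ) * ((m.descFactorial (2 * r) : ℝ) + 1) := by
      have : (0 : ℝ) ≤ (Z.card : ℝ) := by positivity
      nlinarith
    push_cast
    push_cast at hcast this
    linarith
  · -- impossible case: m < 2r, derive contradiction from key
    exfalso
    obtain ⟨S, -, hScard⟩ := Finset.exists_subset_card_eq (s := (univ : Finset (Fin L))) (n := m)
      (by rw [card_univ, Fintype.card_fin]; exact hmL)
    obtain ⟨t, ht, htS⟩ := key S hScard
    have himg : Finset.image t univ ⊆ S := by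
      intro a ha
      simp only [Finset.mem_image, mem_univ, true_and] at ha
      obtain ⟨j, rfl⟩ := ha
      exact htS j
    have h1 : (Finset.image t univ).card = 2 * r := by
      rw [Finset.card_image_of_injective _ (hinjZ t ht), card_univ, Fintype.card_fin]
    have h2 := Finset.card_le_card himg
    omega
end
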